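/- arXiv:1408.0294 — 5 statements merged into one kernel-verified Lean document; each statement's English description precedes it below -/
import Mathlib

section
/- Let $(X_i)_{i \in I}$ be a finite family of positively associated random variables, each taking values in $\{0,1\}$. Then for every $t > 0$, $\mathbb{P}\big(\sum_{i \in I} X_i = 0\big) \le e^{-t|I|}\Big(\prod_{i \in I} \mathbb{E}\big[e^{t(1-X_i)}\big] + t^2 e^{t|I|} \sum_{\{i,j\} \subseteq I,\ i \neq j} \mathrm{Cov}(X_i, X_j)\Big)$, where the sum is over unordered pairs of distinct indices. -/
open MeasureTheory ProbabilityTheory Finset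

/-- Covariance of two real-valued random variables. -/
noncomputable def cov {Ω : Type*} [MeasurableSpace Ω] (μ : Measure Ω) (X Y : Ω → ℝ) : ℝ :=
  (∫ ω, X ω * Y ω ∂μ) - (∫ ω, X ω ∂μ) * (∫ ω, Y ω ∂μ)

/-- A finite family of real random variables is positively associated if every pair of
bounded measurable coordinatewise-nondecreasing functionals of the family has
nonnegative covariance. -/
def PosAssoc {Ω : Type*} [MeasurableSpace Ω] (μ : Measure Ω) {I : Type*} [Fintype I]
    (X : I → Ω → ℝ) : Prop :=
  ∀ f g : (I → ℝ) → ℝ, Measurable f → Measurable g →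
    (∃ C, ∀ x, |f x| ≤ C) → (∃ C, ∀ x, |g x| ≤ C) →
    Monotone f → Monotone g →
    0 ≤ cov μ (fun ω => f (fun i => X i ω)) (fun ω => g (fun i => X i ω))

namespace StmtAux

noncomputable def cl (x : ℝ) : ℝ := max 0 (min x 1)

lemma cl_mono : Monotone cl := fun _ _ h => max_le_max le_rfl (min_le_min h le_rfl)

lemma measurable_cl : Measurable cl :=
  measurable_const.max (measurable_id.min measurable_const)

lemma cl_nonneg (x : ℝ) : 0 ≤ cl x := le_max_left _ _

lemma cl_le_one (x : ℝ) : cl x ≤ 1 := max_le zero_le_one (min_le_right _ _)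

lemma abs_cl_le_one (x : ℝ) : |cl x| ≤ 1 :=
  abs_le.mpr ⟨by linarith [cl_nonneg x], cl_le_one x⟩

lemma cl_of_01 {x : ℝ} (h : x = 0 ∨ x = 1) : cl x = x := by
  rcases h with h | h <;> subst h <;> simp [cl]

lemma integrable_of_bdd {Ω : Type*} [MeasurableSpace Ω] {μ : Measure Ω} [IsFiniteMeasure μ]
    {f : Ω → ℝ} (hm : Measurable f) (C : ℝ) (hb : ∀ ω, |f ω| ≤ C) : Integrable f μ :=
  (integrable_const C).mono' hm.aestronglyMeasurable (ae_of_all _ hb)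

lemma prod_sub_prod_le {I : Type*} [DecidableEq I] (S : Finset I) (p q : I → ℝ) (A : ℝ)
    (hA : 1 ≤ A) (hq1 : ∀ i ∈ S, 1 ≤ q i) (hqp : ∀ i ∈ S, q i ≤ p i) (hpA : ∀ i ∈ S, p i ≤ A) :
    (∏ i ∈ S, p i) - (∏ i ∈ S, q i) ≤ (∑ i ∈ S, (p i - q i)) * A ^ S.card / A := by
  have hA0 : (0:ℝ) < A := lt_of_lt_of_le one_pos hA
  induction S using Finset.induction_on with
  | empty => simp
  | @insert k S hk ih =>
    have hq1' : ∀ i ∈ S, 1 ≤ q i := fun i hi => hq1 i (mem_insert_of_mem hi)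
    have hqp' : ∀ i ∈ S, q i ≤ p i := fun i hi => hqp i (mem_insert_of_mem hi)
    have hpA' : ∀ i ∈ S, p i ≤ A := fun i hi => hpA i (mem_insert_of_mem hi)
    have ih' := ih hq1' hqp' hpA'
    have hqnn : ∀ i ∈ S, (0:ℝ) ≤ q i := fun i hi => le_trans zero_le_one (hq1' i hi)
    have hprod_le : (∏ i ∈ S, q i) ≤ ∏ i ∈ S, p i :=
      Finset.prod_le_prod hqnn hqp'
    have hprodA : (∏ i ∈ S, p i) ≤ A ^ S.card := by
      calc (∏ i ∈ S, p i) ≤ ∏ _i ∈ S, A := Finset.prod_le_prod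
            (fun i hi => le_trans (le_trans zero_le_one (hq1' i hi)) (hqp' i hi))
            hpA'
        _ = A ^ S.card := by rw [Finset.prod_const]
    have hk1 : 1 ≤ q k := hq1 k (mem_insert_self _ _)
    have hkqp : q k ≤ p k := hqp k (mem_insert_self _ _)
    have hkA : p k ≤ A := hpA k (mem_insert_self _ _)
    rw [Finset.prod_insert hk, Finset.prod_insert hk, Finset.sum_insert hk,
      Finset.card_insert_of_notMem hk]
    have key : p k * (∏ i ∈ S, p i) - q k * (∏ i ∈ S, q i)
        = (p k - q k) * (∏ i ∈ S, p i) + q k * ((∏ i ∈ S, p i) - (∏ i ∈ S, q i)) := by ring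
    rw [key]
    have h1 : (p k - q k) * (∏ i ∈ S, p i) ≤ (p k - q k) * A ^ S.card :=
      mul_le_mul_of_nonneg_left hprodA (by linarith)
    have h2 : q k * ((∏ i ∈ S, p i) - (∏ i ∈ S, q i))
        ≤ A * ((∑ i ∈ S, (p i - q i)) * A ^ S.card / A) := by
      calc q k * ((∏ i ∈ S, p i) - (∏ i ∈ S, q i))
          ≤ A * ((∏ i ∈ S, p i) - (∏ i ∈ S, q i)) :=
            mul_le_mul_of_nonneg_right (le_trans hkqp hkA) (by linarith)
        _ ≤ A * ((∑ i ∈ S, (p i - q i)) * A ^ S.card / A) :=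
            mul_le_mul_of_nonneg_left ih' (le_of_lt hA0)
    have h3 : A * ((∑ i ∈ S, (p i - q i)) * A ^ S.card / A)
        = (∑ i ∈ S, (p i - q i)) * A ^ S.card := by field_simp
    rw [h3] at h2
    have h4 : (p k - q k) * A ^ S.card + (∑ i ∈ S, (p i - q i)) * A ^ S.card
        = ((p k - q k) + ∑ i ∈ S, (p i - q i)) * A ^ (S.card + 1) / A := by
      field_simp; ring
    linarith

lemma cov_comm {Ω : Type*} [MeasurableSpace Ω] (μ : Measure Ω) (W Y : Ω → ℝ) :
    cov μ W Y = cov μ Y W := by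
  unfold cov
  rw [show (fun ω => W ω * Y ω) = fun ω => Y ω * W ω from funext fun ω => mul_comm _ _]
  ring

lemma cov_const_mul_right {Ω : Type*} [MeasurableSpace Ω] (μ : Measure Ω) (W Y : Ω → ℝ) (c : ℝ) :
    cov μ W (fun ω => c * Y ω) = c * cov μ W Y := by
  unfold cov
  rw [show (fun ω => W ω * (c * Y ω)) = fun ω => c * (W ω * Y ω) from funext fun ω => by ring,
    integral_const_mul, integral_const_mul]
  ring

lemma cov_add_right {Ω : Type*} [MeasurableSpace Ω] (μ : Measure Ω) (W Y Z : Ω → ℝ)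
    (hWY : Integrable (fun ω => W ω * Y ω) μ) (hWZ : Integrable (fun ω => W ω * Z ω) μ)
    (hY : Integrable Y μ) (hZ : Integrable Z μ) :
    cov μ W (fun ω => Y ω + Z ω) = cov μ W Y + cov μ W Z := by
  unfold cov
  rw [show (fun ω => W ω * (Y ω + Z ω)) = fun ω => W ω * Y ω + W ω * Z ω from
    funext fun ω => by ring, integral_add hWY hWZ, integral_add hY hZ]
  ring

lemma cov_sum_right {Ω κ : Type*} [MeasurableSpace Ω] (μ : Measure Ω) (s : Finset κ)
    (W : Ω → ℝ) (Y : κ → Ω → ℝ)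
    (hWY : ∀ j ∈ s, Integrable (fun ω => W ω * Y j ω) μ)
    (hY : ∀ j ∈ s, Integrable (Y j) μ) :
    cov μ W (fun ω => ∑ j ∈ s, Y j ω) = ∑ j ∈ s, cov μ W (Y j) := by
  unfold cov
  rw [show (fun ω => W ω * ∑ j ∈ s, Y j ω) = fun ω => ∑ j ∈ s, W ω * Y j ω from
      funext fun ω => by rw [Finset.mul_sum],
    integral_finset_sum s hWY, integral_finset_sum s hY, Finset.mul_sum,
    Finset.sum_sub_distrib]

lemma cov_affine_left {Ω : Type*} [MeasurableSpace Ω] (μ : Measure Ω) [IsProbabilityMeasure μ]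
    (W Y : Ω → ℝ) (b c : ℝ)
    (hWY : Integrable (fun ω => W ω * Y ω) μ) (hY : Integrable Y μ) (hW : Integrable W μ) :
    cov μ (fun ω => b + c * W ω) Y = c * cov μ W Y := by
  unfold cov
  rw [show (fun ω => (b + c * W ω) * Y ω) = fun ω => b * Y ω + c * (W ω * Y ω) from
      funext fun ω => by ring,
    integral_add (hY.const_mul b) (hWY.const_mul c), integral_const_mul, integral_const_mul,
    integral_add (integrable_const b) (hW.const_mul c), integral_const_mul, integral_const]
  simp [measure_univ]
  ring

end StmtAux

open StmtAux

theorem stmt0 {Ω : Type*} [MeasurableSpace Ω] (μ : Measure Ω) [IsProbabilityMeasure μ]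
    {I : Type*} [Fintype I] [DecidableEq I] (X : I → Ω → ℝ)
    (hmeas : ∀ i, Measurable (X i))
    (h01 : ∀ i ω, X i ω = 0 ∨ X i ω = 1)
    (hassoc : PosAssoc μ X)
    (t : ℝ) (ht : 0 < t) :
    (μ {ω | ∑ i, X i ω = 0}).toReal ≤
      Real.exp (-t * Fintype.card I) *
        ((∏ i, ∫ ω, Real.exp (t * (1 - X i ω)) ∂μ) +
          t ^ 2 * Real.exp (t * Fintype.card I) *
            ((∑ q ∈ Finset.univ.offDiag, cov μ (X q.1) (X q.2)) / 2)) := by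
  set A := Real.exp t with hAdef
  have hA0 : (0:ℝ) < A := Real.exp_pos t
  have hA1 : 1 ≤ A := Real.one_le_exp ht.le
  set Z : I → Ω → ℝ := fun i ω => A - (A - 1) * X i ω with hZdef
  have hZval : ∀ i ω, Z i ω = Real.exp (t * (1 - X i ω)) := by
    intro i ω
    rcases h01 i ω with h | h <;> simp [hZdef, hAdef, h] <;> ring_nf
  have hZ1 : ∀ i ω, 1 ≤ Z i ω := by
    intro i ω; rcases h01 i ω with h | h <;> simp [hZdef, h] <;> linarith
  have hZA : ∀ i ω, Z i ω ≤ A := by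
    intro i ω; rcases h01 i ω with h | h <;> simp [hZdef, h] <;> linarith
  have hXb : ∀ i ω, |X i ω| ≤ 1 := by
    intro i ω; rcases h01 i ω with h | h <;> simp [h]
  have hXint : ∀ i, Integrable (X i) μ := fun i => integrable_of_bdd (hmeas i) 1 (hXb i)
  have hZmeas : ∀ i, Measurable (Z i) := fun i => measurable_const.sub ((hmeas i).const_mul _)
  have hPmeas : ∀ S : Finset I, Measurable (fun ω => ∏ i ∈ S, Z i ω) :=
    fun S => Finset.measurable_prod S (fun i _ => hZmeas i)
  have hPb : ∀ (S : Finset I) ω, |∏ i ∈ S, Z i ω| ≤ A ^ S.card := by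
    intro S ω
    rw [abs_of_nonneg (Finset.prod_nonneg fun i _ => le_trans zero_le_one (hZ1 i ω))]
    calc (∏ i ∈ S, Z i ω) ≤ ∏ _i ∈ S, A :=
          Finset.prod_le_prod (fun i _ => le_trans zero_le_one (hZ1 i ω)) (fun i _ => hZA i ω)
      _ = A ^ S.card := Finset.prod_const A
  have hPint : ∀ S : Finset I, Integrable (fun ω => ∏ i ∈ S, Z i ω) μ :=
    fun S => integrable_of_bdd (hPmeas S) _ (hPb S)
  have hZint : ∀ i, Integrable (Z i) μ :=
    fun i => integrable_of_bdd (hZmeas i) A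
      (fun ω => abs_le.mpr ⟨by linarith [hZ1 i ω], hZA i ω⟩)
  have hXPint : ∀ (k : I) (S : Finset I),
      Integrable (fun ω => X k ω * ∏ i ∈ S, Z i ω) μ := by
    intro k S
    refine integrable_of_bdd ((hmeas k).mul (hPmeas S)) (A ^ S.card) (fun ω => ?_)
    rw [abs_mul]
    calc |X k ω| * |∏ i ∈ S, Z i ω| ≤ 1 * A ^ S.card :=
          mul_le_mul (hXb k ω) (hPb S ω) (abs_nonneg _) zero_le_one
      _ = A ^ S.card := one_mul _
  have hXXint : ∀ k i : I, Integrable (fun ω => X k ω * X i ω) μ := by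
    intro k i
    refine integrable_of_bdd ((hmeas k).mul (hmeas i)) 1 (fun ω => ?_)
    rw [abs_mul]
    calc |X k ω| * |X i ω| ≤ 1 * 1 :=
          mul_le_mul (hXb k ω) (hXb i ω) (abs_nonneg _) zero_le_one
      _ = 1 := one_mul _
  -- pairwise covariances are nonnegative
  have hclX : ∀ i, (fun ω => cl (X i ω)) = X i := fun i => funext fun ω => cl_of_01 (h01 i ω)
  have hcovXX : ∀ i j, 0 ≤ cov μ (X i) (X j) := by
    intro i j
    have h := hassoc (fun x => cl (x i)) (fun x => cl (x j))
      (measurable_cl.comp (measurable_pi_apply i)) (measurable_cl.comp (measurable_pi_apply j))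
      ⟨1, fun x => abs_cl_le_one _⟩ ⟨1, fun x => abs_cl_le_one _⟩
      (fun a b hab => cl_mono (hab i)) (fun a b hab => cl_mono (hab j))
    simpa only [hclX i, hclX j] using h
  -- the key covariance estimate
  have covkey : ∀ (S : Finset I) (k : I),
      -((A - 1) * A ^ S.card / A * ∑ i ∈ S, cov μ (X k) (X i))
        ≤ cov μ (X k) (fun ω => ∏ i ∈ S, Z i ω) := by
    intro S k
    set L : ℝ := (A - 1) * A ^ S.card / A with hLdef
    have hL0 : 0 ≤ L := by
      apply div_nonneg (mul_nonneg (by linarith) (pow_nonneg hA0.le _)) hA0.le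
    set g : (I → ℝ) → ℝ :=
      fun x => (∏ i ∈ S, (A - (A - 1) * cl (x i))) + L * ∑ i ∈ S, cl (x i) with hgdef
    have hgmeas : Measurable g := by
      apply Measurable.add
      · exact Finset.measurable_prod S (fun i _ =>
          measurable_const.sub ((measurable_cl.comp (measurable_pi_apply i)).const_mul _))
      · exact (Finset.measurable_sum S (fun i _ =>
          measurable_cl.comp (measurable_pi_apply i))).const_mul _
    have hgfac : ∀ (x : I → ℝ) (i : I), 1 ≤ A - (A - 1) * cl (x i) ∧ A - (A - 1) * cl (x i) ≤ A := by
      intro x i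
      constructor
      · nlinarith [cl_le_one (x i), cl_nonneg (x i)]
      · nlinarith [cl_le_one (x i), cl_nonneg (x i)]
    have hgbdd : ∃ C, ∀ x, |g x| ≤ C := by
      refine ⟨A ^ S.card + L * S.card, fun x => ?_⟩
      have h1 : |∏ i ∈ S, (A - (A - 1) * cl (x i))| ≤ A ^ S.card := by
        rw [abs_of_nonneg (Finset.prod_nonneg fun i _ =>
          le_trans zero_le_one (hgfac x i).1)]
        calc (∏ i ∈ S, (A - (A - 1) * cl (x i))) ≤ ∏ _i ∈ S, A :=
              Finset.prod_le_prod (fun i _ => le_trans zero_le_one (hgfac x i).1)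
                (fun i _ => (hgfac x i).2)
          _ = A ^ S.card := Finset.prod_const A
      have h2 : |L * ∑ i ∈ S, cl (x i)| ≤ L * S.card := by
        rw [abs_mul, abs_of_nonneg hL0]
        apply mul_le_mul_of_nonneg_left _ hL0
        calc |∑ i ∈ S, cl (x i)| ≤ ∑ i ∈ S, |cl (x i)| := Finset.abs_sum_le_sum_abs _ _
          _ ≤ ∑ _i ∈ S, (1:ℝ) := Finset.sum_le_sum (fun i _ => abs_cl_le_one _)
          _ = S.card := by simp
      calc |g x| ≤ |∏ i ∈ S, (A - (A - 1) * cl (x i))| + |L * ∑ i ∈ S, cl (x i)| :=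
            abs_add_le _ _
        _ ≤ A ^ S.card + L * S.card := add_le_add h1 h2
    have hgmono : Monotone g := by
      intro x y hxy
      have huv : ∀ i, cl (x i) ≤ cl (y i) := fun i => cl_mono (hxy i)
      have key := prod_sub_prod_le S (fun i => A - (A - 1) * cl (x i))
        (fun i => A - (A - 1) * cl (y i)) A hA1
        (fun i _ => (hgfac y i).1)
        (fun i _ => by
          show A - (A - 1) * cl (y i) ≤ A - (A - 1) * cl (x i)
          have := huv i; nlinarith)
        (fun i _ => (hgfac x i).2)
      have hsA : (∑ i ∈ S, ((A - (A - 1) * cl (x i)) - (A - (A - 1) * cl (y i)))) * A ^ S.card / A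
          = L * ((∑ i ∈ S, cl (y i)) - ∑ i ∈ S, cl (x i)) := by
        rw [← Finset.sum_sub_distrib]
        have : (∑ i ∈ S, ((A - (A - 1) * cl (x i)) - (A - (A - 1) * cl (y i))))
            = (A - 1) * ∑ i ∈ S, (cl (y i) - cl (x i)) := by
          rw [Finset.mul_sum]; apply Finset.sum_congr rfl; intros; ring
        rw [this, Finset.sum_sub_distrib, hLdef]; ring
      rw [hsA] at key
      simp only [hgdef]
      linarith
    have h := hassoc (fun x => cl (x k)) g
      (measurable_cl.comp (measurable_pi_apply k)) hgmeas
      ⟨1, fun x => abs_cl_le_one _⟩ hgbdd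
      (fun a b hab => cl_mono (hab k)) hgmono
    have hgcomp : (fun ω => g (fun i => X i ω))
        = fun ω => (∏ i ∈ S, Z i ω) + L * ∑ i ∈ S, X i ω := by
      funext ω
      simp only [hgdef]
      congr 1
      · exact Finset.prod_congr rfl fun i _ => by rw [cl_of_01 (h01 i ω)]
      · congr 1; exact Finset.sum_congr rfl fun i _ => cl_of_01 (h01 i ω)
    rw [hclX k, hgcomp] at h
    have hLsum_int : Integrable (fun ω => L * ∑ i ∈ S, X i ω) μ :=
      ((integrable_finset_sum S (fun i _ => hXint i)).const_mul L)
    have hXLsum_int : Integrable (fun ω => X k ω * (L * ∑ i ∈ S, X i ω)) μ := by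
      have : (fun ω => X k ω * (L * ∑ i ∈ S, X i ω))
          = fun ω => L * ∑ i ∈ S, X k ω * X i ω := by
        funext ω
        simp only [Finset.mul_sum]
        exact Finset.sum_congr rfl fun i _ => by ring
      rw [this]
      exact (integrable_finset_sum S (fun i _ => hXXint k i)).const_mul L
    rw [cov_add_right μ (X k) _ _ (hXPint k S) hXLsum_int (hPint S) hLsum_int] at h
    rw [cov_const_mul_right μ (X k) (fun ω => ∑ i ∈ S, X i ω) L] at h
    rw [cov_sum_right μ S (X k) X (fun i _ => hXXint k i) (fun i _ => hXint i)] at h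
    linarith
  -- bounds on the integrals of Z
  have hintZ_le : ∀ i, (∫ ω, Z i ω ∂μ) ≤ A := by
    intro i
    calc (∫ ω, Z i ω ∂μ) ≤ ∫ _ω, A ∂μ := integral_mono (hZint i) (integrable_const A)
          (fun ω => hZA i ω)
      _ = A := by simp [measure_univ]
  have hintZ_ge : ∀ i, (0:ℝ) ≤ ∫ ω, Z i ω ∂μ :=
    fun i => integral_nonneg (fun ω => le_trans zero_le_one (hZ1 i ω))
  -- the main induction
  have main : ∀ S : Finset I, (∫ ω, ∏ i ∈ S, Z i ω ∂μ)
      ≤ (∏ i ∈ S, ∫ ω, Z i ω ∂μ)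
        + (A - 1) ^ 2 / A ^ 2 * A ^ S.card
          * ((∑ q ∈ S.offDiag, cov μ (X q.1) (X q.2)) / 2) := by
    intro S
    induction S using Finset.induction_on with
    | empty => simp [measure_univ]
    | @insert k S hk ih =>
      have hoffsum_nonneg : 0 ≤ ∑ q ∈ S.offDiag, cov μ (X q.1) (X q.2) :=
        Finset.sum_nonneg fun q _ => hcovXX q.1 q.2
      have hS_sum_nonneg : 0 ≤ ∑ i ∈ S, cov μ (X k) (X i) :=
        Finset.sum_nonneg fun i _ => hcovXX k i
      -- split the integral
      have hsplit : (∫ ω, ∏ i ∈ insert k S, Z i ω ∂μ)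
          = cov μ (Z k) (fun ω => ∏ i ∈ S, Z i ω)
            + (∫ ω, Z k ω ∂μ) * (∫ ω, ∏ i ∈ S, Z i ω ∂μ) := by
        simp only [Finset.prod_insert hk]
        unfold cov
        ring
      -- bound the covariance term
      have hZkaff : Z k = fun ω => A + (-(A-1)) * X k ω := by
        funext ω; simp only [hZdef]; ring
      have hZkP_int : Integrable (fun ω => Z k ω * ∏ i ∈ S, Z i ω) μ := by
        refine integrable_of_bdd ((hZmeas k).mul (hPmeas S)) (A * A ^ S.card) (fun ω => ?_)
        rw [abs_mul]
        exact mul_le_mul (abs_le.mpr ⟨by linarith [hZ1 k ω], hZA k ω⟩) (hPb S ω)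
          (abs_nonneg _) hA0.le
      have hcovZ : cov μ (Z k) (fun ω => ∏ i ∈ S, Z i ω)
          = -(A - 1) * cov μ (X k) (fun ω => ∏ i ∈ S, Z i ω) := by
        rw [hZkaff]
        exact cov_affine_left μ (X k) _ A (-(A-1)) (hXPint k S) (hPint S) (hXint k)
      have hcov_le : cov μ (Z k) (fun ω => ∏ i ∈ S, Z i ω)
          ≤ (A - 1) * ((A - 1) * A ^ S.card / A * ∑ i ∈ S, cov μ (X k) (X i)) := by
        rw [hcovZ]
        have h1 := covkey S k
        nlinarith [h1, hA1]
      -- the off-diagonal sum of the inserted set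
      have hd2 : Disjoint S.offDiag ({k} ×ˢ S) := by
        simp only [Finset.disjoint_left, Finset.mem_offDiag, Finset.mem_product,
          Finset.mem_singleton]
        rintro ⟨a, b⟩ ⟨haS, hbS, hab⟩ ⟨hak, hbS'⟩
        exact hk (hak ▸ haS)
      have hd1 : Disjoint (S.offDiag ∪ {k} ×ˢ S) (S ×ˢ {k}) := by
        simp only [Finset.disjoint_left, Finset.mem_union, Finset.mem_offDiag,
          Finset.mem_product, Finset.mem_singleton]
        rintro ⟨a, b⟩ h ⟨haS, hbk⟩
        rcases h with ⟨_, hbS, _⟩ | ⟨hak, _⟩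
        · exact hk (hbk ▸ hbS)
        · exact hk (hak ▸ haS)
      have hoff : ∑ q ∈ (insert k S).offDiag, cov μ (X q.1) (X q.2)
          = (∑ q ∈ S.offDiag, cov μ (X q.1) (X q.2))
            + 2 * ∑ i ∈ S, cov μ (X k) (X i) := by
        rw [Finset.offDiag_insert hk, Finset.sum_union hd1, Finset.sum_union hd2]
        have e1 : ∑ q ∈ ({k} ×ˢ S), cov μ (X q.1) (X q.2) = ∑ i ∈ S, cov μ (X k) (X i) := by
          rw [Finset.sum_product, Finset.sum_singleton]
        have e2 : ∑ q ∈ (S ×ˢ {k}), cov μ (X q.1) (X q.2) = ∑ i ∈ S, cov μ (X k) (X i) := by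
          rw [Finset.sum_product]
          simp only [Finset.sum_singleton]
          exact Finset.sum_congr rfl fun i _ => cov_comm μ (X i) (X k)
        rw [e1, e2]; ring
      -- put everything together
      have hZkint_le := hintZ_le k
      have hZkint_ge := hintZ_ge k
      have hstep2 : (∫ ω, Z k ω ∂μ) * (∫ ω, ∏ i ∈ S, Z i ω ∂μ)
          ≤ (∫ ω, Z k ω ∂μ) * ((∏ i ∈ S, ∫ ω, Z i ω ∂μ)
              + (A - 1) ^ 2 / A ^ 2 * A ^ S.card
                * ((∑ q ∈ S.offDiag, cov μ (X q.1) (X q.2)) / 2)) :=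
        mul_le_mul_of_nonneg_left ih hZkint_ge
      have herr_nonneg : 0 ≤ (A - 1) ^ 2 / A ^ 2 * A ^ S.card
          * ((∑ q ∈ S.offDiag, cov μ (X q.1) (X q.2)) / 2) := by
        apply mul_nonneg (mul_nonneg (div_nonneg (sq_nonneg _) (sq_nonneg _))
          (pow_nonneg hA0.le _))
        linarith
      have hstep3 : (∫ ω, Z k ω ∂μ) * ((A - 1) ^ 2 / A ^ 2 * A ^ S.card
            * ((∑ q ∈ S.offDiag, cov μ (X q.1) (X q.2)) / 2))
          ≤ A * ((A - 1) ^ 2 / A ^ 2 * A ^ S.card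
            * ((∑ q ∈ S.offDiag, cov μ (X q.1) (X q.2)) / 2)) :=
        mul_le_mul_of_nonneg_right hZkint_le herr_nonneg
      have hcoef : (A - 1) * ((A - 1) * A ^ S.card / A)
          = (A - 1) ^ 2 / A ^ 2 * A ^ (S.card + 1) := by
        field_simp
        ring
      rw [hsplit, Finset.prod_insert hk, Finset.card_insert_of_notMem hk, hoff]
      have expand : (A - 1) ^ 2 / A ^ 2 * A ^ (S.card + 1)
            * (((∑ q ∈ S.offDiag, cov μ (X q.1) (X q.2))
              + 2 * ∑ i ∈ S, cov μ (X k) (X i)) / 2)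
          = (A - 1) ^ 2 / A ^ 2 * A ^ (S.card + 1)
              * ((∑ q ∈ S.offDiag, cov μ (X q.1) (X q.2)) / 2)
            + (A - 1) ^ 2 / A ^ 2 * A ^ (S.card + 1) * ∑ i ∈ S, cov μ (X k) (X i) := by
        ring
      rw [expand]
      have hpow_le : (A:ℝ) ^ S.card ≤ A ^ (S.card + 1) :=
        pow_le_pow_right₀ hA1 (Nat.le_succ _)
      have hmono1 : (A - 1) * ((A - 1) * A ^ S.card / A * ∑ i ∈ S, cov μ (X k) (X i))
          ≤ (A - 1) ^ 2 / A ^ 2 * A ^ (S.card + 1) * ∑ i ∈ S, cov μ (X k) (X i) := by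
        have : (A - 1) * ((A - 1) * A ^ S.card / A) ≤ (A - 1) ^ 2 / A ^ 2 * A ^ (S.card + 1) := by
          rw [hcoef]
        calc (A - 1) * ((A - 1) * A ^ S.card / A * ∑ i ∈ S, cov μ (X k) (X i))
            = (A - 1) * ((A - 1) * A ^ S.card / A) * ∑ i ∈ S, cov μ (X k) (X i) := by ring
          _ ≤ _ := mul_le_mul_of_nonneg_right this hS_sum_nonneg
      have hAA : A * ((A - 1) ^ 2 / A ^ 2 * A ^ S.card
            * ((∑ q ∈ S.offDiag, cov μ (X q.1) (X q.2)) / 2))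
          = (A - 1) ^ 2 / A ^ 2 * A ^ (S.card + 1)
              * ((∑ q ∈ S.offDiag, cov μ (X q.1) (X q.2)) / 2) := by
        ring
      nlinarith [hcov_le, hstep2, hstep3, hmono1, hAA]
  -- relate the event to the product
  have hsummeas : Measurable fun ω => ∑ i, X i ω :=
    Finset.measurable_sum Finset.univ (fun i _ => hmeas i)
  have hsmeas : MeasurableSet {ω | ∑ i, X i ω = 0} :=
    hsummeas (measurableSet_singleton 0)
  set n := Fintype.card I with hndef
  have hind : ∀ ω, A ^ n * Set.indicator {ω | ∑ i, X i ω = 0} (fun _ => (1:ℝ)) ω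
      ≤ ∏ i, Z i ω := by
    intro ω
    by_cases hω : ω ∈ {ω | ∑ i, X i ω = 0}
    · have hzero : ∀ i ∈ Finset.univ, X i ω = 0 := by
        have := (Finset.sum_eq_zero_iff_of_nonneg (fun i _ => by
          rcases h01 i ω with h | h <;> simp [h])).mp hω
        exact fun i hi => this i hi
      rw [Set.indicator_of_mem hω]
      have : (∏ i, Z i ω) = A ^ n := by
        rw [show (∏ i, Z i ω) = ∏ _i : I, A from Finset.prod_congr rfl
          fun i hi => by simp [hZdef, hzero i hi], Finset.prod_const, Finset.card_univ]
      rw [this, mul_one]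
    · rw [Set.indicator_of_notMem hω, mul_zero]
      exact Finset.prod_nonneg fun i _ => le_trans zero_le_one (hZ1 i ω)
  have hind_int : Integrable
      (fun ω => A ^ n * Set.indicator {ω | ∑ i, X i ω = 0} (fun _ => (1:ℝ)) ω) μ :=
    (((integrable_const (1:ℝ)).indicator hsmeas).const_mul _)
  have hmeasure_le : A ^ n * (μ {ω | ∑ i, X i ω = 0}).toReal ≤ ∫ ω, ∏ i, Z i ω ∂μ := by
    have h1 : (∫ ω, A ^ n * Set.indicator {ω | ∑ i, X i ω = 0} (fun _ => (1:ℝ)) ω ∂μ)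
        ≤ ∫ ω, ∏ i, Z i ω ∂μ :=
      integral_mono hind_int (hPint Finset.univ) hind
    have h2 : (∫ ω, A ^ n * Set.indicator {ω | ∑ i, X i ω = 0} (fun _ => (1:ℝ)) ω ∂μ)
        = A ^ n * (μ {ω | ∑ i, X i ω = 0}).toReal := by
      rw [integral_const_mul, integral_indicator hsmeas]
      simp [Measure.real]
    rw [h2] at h1
    exact h1
  -- final assembly
  have hApow : A ^ n = Real.exp (t * n) := by
    rw [hAdef, ← Real.exp_nat_mul, mul_comm]
  have hexp_neg : Real.exp (-t * n) = (A ^ n)⁻¹ := by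
    rw [hApow, ← Real.exp_neg]
    ring_nf
  have hApow_pos : (0:ℝ) < A ^ n := pow_pos hA0 n
  have huniv_nonneg : 0 ≤ ∑ q ∈ Finset.univ.offDiag, cov μ (X q.1) (X q.2) :=
    Finset.sum_nonneg fun q _ => hcovXX q.1 q.2
  have hcoef_le : (A - 1) ^ 2 / A ^ 2 ≤ t ^ 2 := by
    have hkey : A - 1 ≤ t * A := by
      have h1 : -t + 1 ≤ Real.exp (-t) := Real.add_one_le_exp (-t)
      have h2 : Real.exp (-t) * A = 1 := by
        rw [hAdef, ← Real.exp_add]; simp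
      nlinarith
    have hA1' : 0 ≤ A - 1 := by linarith
    have h3 : (A - 1) ^ 2 ≤ (t * A) ^ 2 := by nlinarith
    rw [div_le_iff₀ (by positivity)]
    nlinarith
  have hZint_eq : ∀ i, (∫ ω, Z i ω ∂μ) = ∫ ω, Real.exp (t * (1 - X i ω)) ∂μ :=
    fun i => integral_congr_ae (ae_of_all _ (fun ω => hZval i ω))
  have hmain := main Finset.univ
  rw [Finset.card_univ, ← hndef] at hmain
  have hbound2 : (∫ ω, ∏ i, Z i ω ∂μ)
      ≤ (∏ i, ∫ ω, Real.exp (t * (1 - X i ω)) ∂μ)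
        + t ^ 2 * A ^ n * ((∑ q ∈ Finset.univ.offDiag, cov μ (X q.1) (X q.2)) / 2) := by
    have e1 : (∏ i, ∫ ω, Z i ω ∂μ) = ∏ i, ∫ ω, Real.exp (t * (1 - X i ω)) ∂μ :=
      Finset.prod_congr rfl fun i _ => hZint_eq i
    have h4 : (A - 1) ^ 2 / A ^ 2 * A ^ n
          * ((∑ q ∈ Finset.univ.offDiag, cov μ (X q.1) (X q.2)) / 2)
        ≤ t ^ 2 * A ^ n * ((∑ q ∈ Finset.univ.offDiag, cov μ (X q.1) (X q.2)) / 2) := by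
      apply mul_le_mul_of_nonneg_right _ (by linarith)
      exact mul_le_mul_of_nonneg_right hcoef_le hApow_pos.le
    calc (∫ ω, ∏ i, Z i ω ∂μ) ≤ _ := hmain
      _ ≤ _ := by rw [e1]; linarith
  have hfinal : (μ {ω | ∑ i, X i ω = 0}).toReal
      ≤ (A ^ n)⁻¹ * ((∏ i, ∫ ω, Real.exp (t * (1 - X i ω)) ∂μ)
        + t ^ 2 * A ^ n * ((∑ q ∈ Finset.univ.offDiag, cov μ (X q.1) (X q.2)) / 2)) := by
    have h5 : (μ {ω | ∑ i, X i ω = 0}).toReal ≤ (A ^ n)⁻¹ * ∫ ω, ∏ i, Z i ω ∂μ := by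
      rw [← div_eq_inv_mul, le_div_iff₀ hApow_pos, mul_comm]
      exact hmeasure_le
    calc (μ {ω | ∑ i, X i ω = 0}).toReal ≤ (A ^ n)⁻¹ * ∫ ω, ∏ i, Z i ω ∂μ := h5
      _ ≤ _ := mul_le_mul_of_nonneg_left hbound2 (by positivity)
  rw [hexp_neg, ← hApow]
  exact hfinal
end

section
/- Let $(X_i)_{i \in I}$ be a finite family of positively associated random variables, each taking values in $\{0,1\}$ and identically distributed with $\mathbb{P}(X_i = 1) = p = 1 - \mathbb{P}(X_i = 0)$, where $0 < p < 1$. Then for every $t > 0$, $\mathbb{P}\big(\sum_{i \in I} X_i = 0\big) \le (1-p)^{|I|}\Big(1 + e^{-t}\frac{p}{1-p}\Big)^{|I|} + t^2 \sum_{\{i,j\} \subseteq I,\ i \neq j} \mathrm{Cov}(X_i, X_j)$, where the sum is over unordered pairs of distinct indices. -/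
open MeasureTheory ProbabilityTheory Finset

namespace Stmt1Aux

lemma integrable_of_bdd {Ω : Type*} [MeasurableSpace Ω] {μ : Measure Ω} [IsFiniteMeasure μ]
    {f : Ω → ℝ} {C : ℝ} (hf : Measurable f) (hC : ∀ ω, |f ω| ≤ C) : Integrable f μ :=
  (integrable_const C).mono' hf.aestronglyMeasurable
    (Filter.Eventually.of_forall fun ω => by simpa [Real.norm_eq_abs] using hC ω)

lemma cov_comm {Ω : Type*} [MeasurableSpace Ω] (μ : Measure Ω) (Y Z : Ω → ℝ) :
    cov μ Y Z = cov μ Z Y := by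
  have h : (fun ω => Y ω * Z ω) = fun ω => Z ω * Y ω := funext fun ω => mul_comm _ _
  unfold cov
  rw [h]; ring

lemma cov_add_sum {Ω : Type*} [MeasurableSpace Ω] (μ : Measure Ω) [IsProbabilityMeasure μ]
    {I : Type*} (s : Finset I) (Y Z : Ω → ℝ) (X : I → Ω → ℝ) (c : ℝ)
    (hZ : Integrable Z μ) (hX : ∀ j ∈ s, Integrable (X j) μ)
    (hYZ : Integrable (fun ω => Y ω * Z ω) μ)
    (hYX : ∀ j ∈ s, Integrable (fun ω => Y ω * X j ω) μ) :
    cov μ Y (fun ω => Z ω + c * ∑ j ∈ s, X j ω)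
      = cov μ Y Z + c * ∑ j ∈ s, cov μ Y (X j) := by
  have h1 : (fun ω => Y ω * (Z ω + c * ∑ j ∈ s, X j ω))
      = fun ω => Y ω * Z ω + c * ∑ j ∈ s, Y ω * X j ω := by
    funext ω
    rw [mul_add, mul_left_comm, Finset.mul_sum]
  have h2 : (fun ω => Z ω + c * ∑ j ∈ s, X j ω)
      = fun ω => Z ω + c * ∑ j ∈ s, X j ω := rfl
  simp only [cov]
  rw [show (∫ ω, Y ω * (Z ω + c * ∑ j ∈ s, X j ω) ∂μ)
      = ∫ ω, (Y ω * Z ω + c * ∑ j ∈ s, Y ω * X j ω) ∂μ by rw [h1]]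
  rw [integral_add hYZ (((integrable_finset_sum s hYX)).const_mul c),
    integral_const_mul, integral_finset_sum s hYX,
    integral_add hZ ((integrable_finset_sum s hX).const_mul c),
    integral_const_mul, integral_finset_sum s hX,
    Finset.sum_sub_distrib]
  rw [show (∑ j ∈ s, (∫ ω, Y ω ∂μ) * ∫ ω, X j ω ∂μ)
      = (∫ ω, Y ω ∂μ) * ∑ j ∈ s, ∫ ω, X j ω ∂μ by rw [Finset.mul_sum]]
  ring


noncomputable def clamp (y : ℝ) : ℝ := max 0 (min y 1)
lemma clamp_mono : Monotone clamp := fun _ _ h => max_le_max le_rfl (min_le_min h le_rfl)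
lemma clamp_nonneg (y : ℝ) : 0 ≤ clamp y := le_max_left _ _
lemma clamp_le_one (y : ℝ) : clamp y ≤ 1 := max_le zero_le_one (min_le_right _ _)
lemma clamp_continuous : Continuous clamp :=
  continuous_const.max (continuous_id.min continuous_const)
lemma clamp_eq {y : ℝ} (h : y = 0 ∨ y = 1) : clamp y = y := by
  rcases h with h | h <;> simp [clamp, h]

section Mono
variable {I : Type*} {a : ℝ}

lemma factor_nonneg (ha1 : a ≤ 1) (y : ℝ) : 0 ≤ 1 - a * clamp y := by
  rcases le_or_gt a 0 with h | h
  · nlinarith [clamp_nonneg y, clamp_le_one y]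
  · nlinarith [clamp_nonneg y, clamp_le_one y]

lemma factor_le_one (ha0 : 0 ≤ a) (y : ℝ) : 1 - a * clamp y ≤ 1 := by
  nlinarith [clamp_nonneg y]

lemma prodAux_nonneg (ha1 : a ≤ 1) (s : Finset I) (x : I → ℝ) :
    0 ≤ ∏ i ∈ s, (1 - a * clamp (x i)) :=
  Finset.prod_nonneg fun i _ => factor_nonneg ha1 (x i)

lemma prodAux_le_one (ha0 : 0 ≤ a) (ha1 : a ≤ 1) (s : Finset I) (x : I → ℝ) :
    ∏ i ∈ s, (1 - a * clamp (x i)) ≤ 1 :=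
  Finset.prod_le_one (fun i _ => factor_nonneg ha1 (x i)) (fun i _ => factor_le_one ha0 (x i))

lemma prodAux_anti (ha0 : 0 ≤ a) (ha1 : a ≤ 1) (s : Finset I) :
    Antitone (fun x : I → ℝ => ∏ i ∈ s, (1 - a * clamp (x i))) := by
  intro x y hxy
  dsimp only
  apply Finset.prod_le_prod (fun i _ => factor_nonneg ha1 (y i))
  intro i _
  have := clamp_mono (hxy i)
  nlinarith

lemma bigF_mono [DecidableEq I] (ha0 : 0 ≤ a) (ha1 : a ≤ 1) (s : Finset I) :
    Monotone (fun x : I → ℝ =>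
      (∏ i ∈ s, (1 - a * clamp (x i))) + a * ∑ i ∈ s, clamp (x i)) := by
  induction s using Finset.induction_on with
  | empty => simp only [Finset.prod_empty, Finset.sum_empty, mul_zero, add_zero]
             exact monotone_const
  | @insert k s hk ih =>
    have hrw : ∀ x : I → ℝ,
        (∏ i ∈ insert k s, (1 - a * clamp (x i))) + a * ∑ i ∈ insert k s, clamp (x i)
        = ((∏ i ∈ s, (1 - a * clamp (x i))) + a * ∑ i ∈ s, clamp (x i))
          + a * (clamp (x k) * (1 - ∏ i ∈ s, (1 - a * clamp (x i)))) := by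
      intro x
      rw [Finset.prod_insert hk, Finset.sum_insert hk]
      ring
    have h2 : Monotone (fun x : I → ℝ =>
        a * (clamp (x k) * (1 - ∏ i ∈ s, (1 - a * clamp (x i))))) := by
      intro u v huv
      dsimp only
      apply mul_le_mul_of_nonneg_left _ ha0
      have hpu := prodAux_anti ha0 ha1 s huv
      exact mul_le_mul (clamp_mono (huv k))
        (by dsimp only at hpu; linarith)
        (by linarith [prodAux_le_one ha0 ha1 s u]) (clamp_nonneg _)
    have := ih.add h2
    intro u v huv
    dsimp only
    rw [hrw u, hrw v]
    exact this huv

lemma bigF_meas [Fintype I] (s : Finset I) :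
    Measurable (fun x : I → ℝ =>
      (∏ i ∈ s, (1 - a * clamp (x i))) + a * ∑ i ∈ s, clamp (x i)) := by
  apply Continuous.measurable
  exact ((continuous_finset_prod s fun i _ =>
      continuous_const.sub (continuous_const.mul
        (clamp_continuous.comp (continuous_apply i)))).add
    (continuous_const.mul (continuous_finset_sum s fun i _ =>
      clamp_continuous.comp (continuous_apply i))))

lemma bigF_bdd (ha0 : 0 ≤ a) (ha1 : a ≤ 1) (s : Finset I) (x : I → ℝ) :
    |(∏ i ∈ s, (1 - a * clamp (x i))) + a * ∑ i ∈ s, clamp (x i)| ≤ 1 + a * s.card := by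
  have hs0 : (0:ℝ) ≤ ∑ i ∈ s, clamp (x i) := Finset.sum_nonneg fun i _ => clamp_nonneg _
  have hs1 : ∑ i ∈ s, clamp (x i) ≤ (s.card : ℝ) := by
    calc ∑ i ∈ s, clamp (x i) ≤ ∑ _i ∈ s, (1:ℝ) := Finset.sum_le_sum fun i _ => clamp_le_one _
      _ = s.card := by simp
  have h1 := prodAux_nonneg ha1 s x
  have h2 := prodAux_le_one ha0 ha1 s x
  rw [abs_le]
  constructor <;> nlinarith

end Mono


section Assoc
variable {Ω : Type*} [MeasurableSpace Ω] {μ : Measure Ω} {I : Type*} [Fintype I]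
  {X : I → Ω → ℝ}

lemma coord_meas (k : I) : Measurable (fun x : I → ℝ => clamp (x k)) :=
  clamp_continuous.measurable.comp (measurable_pi_apply k)

lemma coord_mono (k : I) : Monotone (fun x : I → ℝ => clamp (x k)) :=
  fun _ _ h => clamp_mono (h k)

lemma coord_bdd (k : I) : ∃ C, ∀ x : I → ℝ, |clamp (x k)| ≤ C :=
  ⟨1, fun x => abs_le.2 ⟨by linarith [clamp_nonneg (x k)], clamp_le_one _⟩⟩

lemma cov_nonneg_pair (hassoc : PosAssoc μ X) (h01 : ∀ i ω, X i ω = 0 ∨ X i ω = 1)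
    (i j : I) : 0 ≤ cov μ (X i) (X j) := by
  have h := hassoc (fun x => clamp (x i)) (fun x => clamp (x j))
    (coord_meas i) (coord_meas j) (coord_bdd i) (coord_bdd j) (coord_mono i) (coord_mono j)
  have e1 : (fun ω => clamp (X i ω)) = X i := funext fun ω => clamp_eq (h01 i ω)
  have e2 : (fun ω => clamp (X j ω)) = X j := funext fun ω => clamp_eq (h01 j ω)
  have h' : 0 ≤ cov μ (fun ω => clamp (X i ω)) (fun ω => clamp (X j ω)) := h
  rwa [e1, e2] at h'

lemma assoc_key [DecidableEq I] (hassoc : PosAssoc μ X)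
    (h01 : ∀ i ω, X i ω = 0 ∨ X i ω = 1) {a : ℝ} (ha0 : 0 ≤ a) (ha1 : a ≤ 1)
    (s : Finset I) (k : I) :
    0 ≤ cov μ (X k)
      (fun ω => (∏ i ∈ s, (1 - a * X i ω)) + a * ∑ i ∈ s, X i ω) := by
  have h := hassoc (fun x => clamp (x k))
    (fun x => (∏ i ∈ s, (1 - a * clamp (x i))) + a * ∑ i ∈ s, clamp (x i))
    (coord_meas k) (bigF_meas s) (coord_bdd k)
    ⟨1 + a * s.card, fun x => bigF_bdd ha0 ha1 s x⟩
    (coord_mono k) (bigF_mono ha0 ha1 s)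
  have h' : 0 ≤ cov μ (fun ω => clamp (X k ω))
      (fun ω => (∏ i ∈ s, (1 - a * clamp (X i ω))) + a * ∑ i ∈ s, clamp (X i ω)) := h
  have e1 : (fun ω => clamp (X k ω)) = X k := funext fun ω => clamp_eq (h01 k ω)
  have e2 : (fun ω => (∏ i ∈ s, (1 - a * clamp (X i ω))) + a * ∑ i ∈ s, clamp (X i ω))
      = fun ω => (∏ i ∈ s, (1 - a * X i ω)) + a * ∑ i ∈ s, X i ω := by
    funext ω
    have hc : ∀ i, clamp (X i ω) = X i ω := fun i => clamp_eq (h01 i ω)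
    simp only [hc]
  rwa [e1, e2] at h'

end Assoc


section Key
variable {Ω : Type*} [MeasurableSpace Ω] (μ : Measure Ω) [IsProbabilityMeasure μ]
  {I : Type*} [Fintype I] [DecidableEq I] (X : I → Ω → ℝ)

lemma offDiag_sum_insert {k : I} {s : Finset I} (hk : k ∉ s) :
    ∑ q ∈ (insert k s).offDiag, cov μ (X q.1) (X q.2)
      = ∑ q ∈ s.offDiag, cov μ (X q.1) (X q.2) + 2 * ∑ j ∈ s, cov μ (X k) (X j) := by
  have hd1 : Disjoint s.offDiag ({k} ×ˢ s) := by
    rw [Finset.disjoint_left]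
    rintro ⟨i, j⟩ hmem hmem'
    rw [Finset.mem_offDiag] at hmem
    rw [Finset.mem_product, Finset.mem_singleton] at hmem'
    exact hk (hmem'.1 ▸ hmem.1)
  have hd2 : Disjoint (s.offDiag ∪ {k} ×ˢ s) (s ×ˢ {k}) := by
    rw [Finset.disjoint_left]
    rintro ⟨i, j⟩ hmem hmem'
    rw [Finset.mem_product, Finset.mem_singleton] at hmem'
    rw [Finset.mem_union] at hmem
    rcases hmem with hmem | hmem
    · rw [Finset.mem_offDiag] at hmem
      exact hk (hmem'.2 ▸ hmem.2.1)
    · rw [Finset.mem_product, Finset.mem_singleton] at hmem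
      exact hk (hmem'.2 ▸ hmem.2)
  rw [Finset.offDiag_insert hk, Finset.sum_union hd2, Finset.sum_union hd1,
    Finset.singleton_product, Finset.product_singleton, Finset.sum_map, Finset.sum_map]
  simp only [Function.Embedding.coeFn_mk]
  have : ∑ j ∈ s, cov μ (X j) (X k) = ∑ j ∈ s, cov μ (X k) (X j) :=
    Finset.sum_congr rfl fun j _ => cov_comm μ (X j) (X k)
  rw [this]
  ring

lemma key (hmeas : ∀ i, Measurable (X i)) (h01 : ∀ i ω, X i ω = 0 ∨ X i ω = 1)
    (hassoc : PosAssoc μ X) {a p : ℝ} (ha0 : 0 ≤ a) (ha1 : a ≤ 1)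
    (hp0 : 0 ≤ p) (hp1 : p ≤ 1) (hEX : ∀ i, ∫ ω, X i ω ∂μ = p)
    (s : Finset I) :
    ∫ ω, ∏ i ∈ s, (1 - a * X i ω) ∂μ ≤
      (1 - a * p) ^ s.card + a ^ 2 / 2 * ∑ q ∈ s.offDiag, cov μ (X q.1) (X q.2) := by
  -- basic bounds
  have hX0 : ∀ i ω, 0 ≤ X i ω := fun i ω => by rcases h01 i ω with h | h <;> rw [h] <;> norm_num
  have hX1 : ∀ i ω, X i ω ≤ 1 := fun i ω => by rcases h01 i ω with h | h <;> rw [h] <;> norm_num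
  have hfac0 : ∀ i ω, 0 ≤ 1 - a * X i ω := fun i ω => by
    nlinarith [hX0 i ω, hX1 i ω]
  have hfac1 : ∀ i ω, 1 - a * X i ω ≤ 1 := fun i ω => by
    nlinarith [hX0 i ω]
  have hXint : ∀ i, Integrable (X i) μ := fun i =>
    integrable_of_bdd (hmeas i) (C := 1)
      (fun ω => abs_le.2 ⟨by linarith [hX0 i ω], hX1 i ω⟩)
  induction s using Finset.induction_on with
  | empty => simp
  | @insert k s hk ih =>
    have hPm : Measurable (fun ω => ∏ i ∈ s, (1 - a * X i ω)) :=
      Finset.measurable_prod s fun i _ => measurable_const.sub ((hmeas i).const_mul a)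
    have hP0 : ∀ ω, 0 ≤ ∏ i ∈ s, (1 - a * X i ω) := fun ω =>
      Finset.prod_nonneg fun i _ => hfac0 i ω
    have hP1 : ∀ ω, ∏ i ∈ s, (1 - a * X i ω) ≤ 1 := fun ω =>
      Finset.prod_le_one (fun i _ => hfac0 i ω) (fun i _ => hfac1 i ω)
    have hPint : Integrable (fun ω => ∏ i ∈ s, (1 - a * X i ω)) μ :=
      integrable_of_bdd hPm (C := 1)
        (fun ω => abs_le.2 ⟨by linarith [hP0 ω], hP1 ω⟩)
    have hXPint : Integrable (fun ω => X k ω * ∏ i ∈ s, (1 - a * X i ω)) μ :=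
      integrable_of_bdd ((hmeas k).mul hPm) (C := 1)
        (fun ω => abs_le.2 ⟨by nlinarith [hX0 k ω, hP0 ω],
          by nlinarith [hX0 k ω, hX1 k ω, hP0 ω, hP1 ω]⟩)
    have hXXint : ∀ j ∈ s, Integrable (fun ω => X k ω * X j ω) μ := fun j _ =>
      integrable_of_bdd ((hmeas k).mul (hmeas j)) (C := 1)
        (fun ω => abs_le.2 ⟨by nlinarith [hX0 k ω, hX0 j ω],
          by nlinarith [hX0 k ω, hX1 k ω, hX0 j ω, hX1 j ω]⟩)
    -- covariance lower bound from association
    have hcovsum := cov_add_sum μ s (X k) (fun ω => ∏ i ∈ s, (1 - a * X i ω)) X a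
      hPint (fun j _ => hXint j) hXPint hXXint
    have hcov0 := assoc_key hassoc h01 ha0 ha1 s k
    rw [hcovsum] at hcov0
    -- expansion of the integral
    have hXP : ∫ ω, X k ω * ∏ i ∈ s, (1 - a * X i ω) ∂μ
        = cov μ (X k) (fun ω => ∏ i ∈ s, (1 - a * X i ω))
          + p * ∫ ω, ∏ i ∈ s, (1 - a * X i ω) ∂μ := by
      simp only [cov]
      rw [hEX k]
      ring
    have hexp : ∫ ω, ∏ i ∈ insert k s, (1 - a * X i ω) ∂μ
        = (1 - a * p) * (∫ ω, ∏ i ∈ s, (1 - a * X i ω) ∂μ)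
          - a * cov μ (X k) (fun ω => ∏ i ∈ s, (1 - a * X i ω)) := by
      calc ∫ ω, ∏ i ∈ insert k s, (1 - a * X i ω) ∂μ
          = ∫ ω, ((∏ i ∈ s, (1 - a * X i ω))
              - a * (X k ω * ∏ i ∈ s, (1 - a * X i ω))) ∂μ := by
            apply integral_congr_ae
            filter_upwards with ω
            rw [Finset.prod_insert hk]
            ring
        _ = (∫ ω, ∏ i ∈ s, (1 - a * X i ω) ∂μ)
            - a * ∫ ω, X k ω * ∏ i ∈ s, (1 - a * X i ω) ∂μ := by
            rw [integral_sub hPint (hXPint.const_mul a), integral_const_mul]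
        _ = (1 - a * p) * (∫ ω, ∏ i ∈ s, (1 - a * X i ω) ∂μ)
            - a * cov μ (X k) (fun ω => ∏ i ∈ s, (1 - a * X i ω)) := by
            rw [hXP]; ring
    -- put things together
    have hS1 : 0 ≤ ∑ j ∈ s, cov μ (X k) (X j) :=
      Finset.sum_nonneg fun j _ => cov_nonneg_pair hassoc h01 k j
    have hS2 : 0 ≤ ∑ q ∈ s.offDiag, cov μ (X q.1) (X q.2) :=
      Finset.sum_nonneg fun q _ => cov_nonneg_pair hassoc h01 q.1 q.2
    have h1ap : 0 ≤ 1 - a * p := by nlinarith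
    have h1ap' : 1 - a * p ≤ 1 := by nlinarith
    rw [hexp, offDiag_sum_insert μ X hk, Finset.card_insert_of_notMem hk]
    have hmul := mul_le_mul_of_nonneg_left ih h1ap
    have e1 : (1 - a * p) * ((1 - a * p) ^ s.card
          + a ^ 2 / 2 * ∑ q ∈ s.offDiag, cov μ (X q.1) (X q.2))
        = (1 - a * p) ^ (s.card + 1)
          + (1 - a * p) * (a ^ 2 / 2 * ∑ q ∈ s.offDiag, cov μ (X q.1) (X q.2)) := by
      rw [pow_succ]; ring
    rw [e1] at hmul
    have e2 : (1 - a * p) * (a ^ 2 / 2 * ∑ q ∈ s.offDiag, cov μ (X q.1) (X q.2))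
        ≤ a ^ 2 / 2 * ∑ q ∈ s.offDiag, cov μ (X q.1) (X q.2) :=
      mul_le_of_le_one_left (by positivity) h1ap'
    have e3 := mul_le_mul_of_nonneg_left hcov0 ha0
    nlinarith [hmul, e2, e3]

end Key

end Stmt1Aux

theorem stmt1 {Ω : Type*} [MeasurableSpace Ω] (μ : Measure Ω) [IsProbabilityMeasure μ]
    {I : Type*} [Fintype I] [DecidableEq I] (X : I → Ω → ℝ)
    (hmeas : ∀ i, Measurable (X i))
    (h01 : ∀ i ω, X i ω = 0 ∨ X i ω = 1)
    (hassoc : PosAssoc μ X)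
    (p : ℝ) (hp0 : 0 < p) (hp1 : p < 1)
    (hid : ∀ i, μ {ω | X i ω = 1} = ENNReal.ofReal p)
    (t : ℝ) (ht : 0 < t) :
    (μ {ω | ∑ i, X i ω = 0}).toReal ≤
      (1 - p) ^ Fintype.card I *
        (1 + Real.exp (-t) * (p / (1 - p))) ^ Fintype.card I +
      t ^ 2 * ((∑ q ∈ Finset.univ.offDiag, cov μ (X q.1) (X q.2)) / 2) := by
  classical
  set a : ℝ := 1 - Real.exp (-t) with ha_def
  clear_value a
  have hexp0 : 0 < Real.exp (-t) := Real.exp_pos _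
  have hexp1 : Real.exp (-t) < 1 := by
    rw [Real.exp_lt_one_iff]; linarith
  have ha0 : 0 ≤ a := by rw [ha_def]; linarith
  have ha1 : a ≤ 1 := by rw [ha_def]; linarith
  have hat : a ≤ t := by
    have := Real.add_one_le_exp (-t)
    rw [ha_def]; linarith
  have hX0 : ∀ i ω, 0 ≤ X i ω := fun i ω => by
    rcases h01 i ω with h | h <;> rw [h] <;> norm_num
  -- expectation of each X i is p
  have hEX : ∀ i, ∫ ω, X i ω ∂μ = p := by
    intro i
    have hset : MeasurableSet {ω | X i ω = 1} := by
      have h : {ω | X i ω = 1} = X i ⁻¹' {1} := rfl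
      rw [h]; exact hmeas i (measurableSet_singleton 1)
    have hind : X i = Set.indicator {ω | X i ω = 1} (fun _ => (1:ℝ)) := by
      funext ω
      rcases h01 i ω with h | h
      · rw [h, eq_comm, Set.indicator_apply_eq_zero]
        intro hmem
        simp only [Set.mem_setOf_eq] at hmem
        rw [h] at hmem; norm_num at hmem
      · rw [h]
        have hm : ω ∈ {ω | X i ω = 1} := h
        rw [Set.indicator_of_mem hm]
    rw [hind, MeasureTheory.integral_indicator_const _ hset, measureReal_def, hid i, smul_eq_mul, mul_one,
      ENNReal.toReal_ofReal hp0.le]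
  -- measurability of the event
  have hAset : MeasurableSet {ω | ∑ i, X i ω = 0} := by
    have h : {ω | ∑ i, X i ω = 0} = (fun ω => ∑ i, X i ω) ⁻¹' {0} := rfl
    rw [h]
    exact (Finset.measurable_sum Finset.univ fun i _ => hmeas i) (measurableSet_singleton 0)
  have hfac0 : ∀ i ω, 0 ≤ 1 - a * X i ω := fun i ω => by
    rcases h01 i ω with h | h <;> rw [h] <;> nlinarith
  have hPm : Measurable (fun ω => ∏ i : I, (1 - a * X i ω)) :=
    Finset.measurable_prod Finset.univ fun i _ => measurable_const.sub ((hmeas i).const_mul a)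
  have hP0 : ∀ ω, 0 ≤ ∏ i : I, (1 - a * X i ω) := fun ω =>
    Finset.prod_nonneg fun i _ => hfac0 i ω
  have hP1 : ∀ ω, ∏ i : I, (1 - a * X i ω) ≤ 1 := fun ω =>
    Finset.prod_le_one (fun i _ => hfac0 i ω)
      (fun i _ => by rcases h01 i ω with h | h <;> rw [h] <;> nlinarith)
  have hPint : Integrable (fun ω => ∏ i : I, (1 - a * X i ω)) μ :=
    Stmt1Aux.integrable_of_bdd hPm (C := 1)
      (fun ω => abs_le.2 ⟨by linarith [hP0 ω], hP1 ω⟩)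
  have hmeasure : (μ {ω | ∑ i, X i ω = 0}).toReal
      = ∫ ω, Set.indicator {ω | ∑ i, X i ω = 0} (fun _ => (1:ℝ)) ω ∂μ := by
    rw [MeasureTheory.integral_indicator_const _ hAset, smul_eq_mul, mul_one, measureReal_def]
  have hptwise : ∀ ω, Set.indicator {ω | ∑ i, X i ω = 0} (fun _ => (1:ℝ)) ω
      ≤ ∏ i : I, (1 - a * X i ω) := by
    intro ω
    by_cases hω : ω ∈ {ω | ∑ i, X i ω = 0}
    · rw [Set.indicator_of_mem hω]
      have hzero : ∀ i ∈ Finset.univ, X i ω = 0 :=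
        (Finset.sum_eq_zero_iff_of_nonneg (fun i _ => hX0 i ω)).1 hω
      have h : ∏ i : I, (1 - a * X i ω) = 1 := by
        apply Finset.prod_eq_one
        intro i _
        rw [hzero i (Finset.mem_univ i)]; ring
      rw [h]
    · rw [Set.indicator_of_notMem hω]
      exact hP0 ω
  have hbound1 : (μ {ω | ∑ i, X i ω = 0}).toReal ≤ ∫ ω, ∏ i : I, (1 - a * X i ω) ∂μ := by
    rw [hmeasure]
    apply integral_mono _ hPint hptwise
    exact Stmt1Aux.integrable_of_bdd (measurable_const.indicator hAset) (C := 1)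
      (fun ω => by
        by_cases hω : ω ∈ {ω | ∑ i, X i ω = 0}
        · rw [Set.indicator_of_mem hω]; norm_num
        · rw [Set.indicator_of_notMem hω]; norm_num)
  have hkey := Stmt1Aux.key μ X hmeas h01 hassoc ha0 ha1 hp0.le hp1.le hEX Finset.univ
  rw [Finset.card_univ] at hkey
  have hbase : 1 - a * p = (1 - p) * (1 + Real.exp (-t) * (p / (1 - p))) := by
    have h1p : (1:ℝ) - p ≠ 0 := by linarith
    rw [ha_def]
    field_simp
    ring
  have hS2 : 0 ≤ ∑ q ∈ Finset.univ.offDiag, cov μ (X q.1) (X q.2) :=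
    Finset.sum_nonneg fun q _ => Stmt1Aux.cov_nonneg_pair hassoc h01 q.1 q.2
  have hlast : a ^ 2 / 2 * ∑ q ∈ Finset.univ.offDiag, cov μ (X q.1) (X q.2)
      ≤ t ^ 2 * ((∑ q ∈ Finset.univ.offDiag, cov μ (X q.1) (X q.2)) / 2) := by
    have ha2 : a ^ 2 ≤ t ^ 2 := by nlinarith
    have h := mul_le_mul_of_nonneg_right ha2 hS2
    linarith
  calc (μ {ω | ∑ i, X i ω = 0}).toReal
      ≤ ∫ ω, ∏ i : I, (1 - a * X i ω) ∂μ := hbound1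
    _ ≤ (1 - a * p) ^ Fintype.card I
        + a ^ 2 / 2 * ∑ q ∈ Finset.univ.offDiag, cov μ (X q.1) (X q.2) := hkey
    _ ≤ (1 - p) ^ Fintype.card I * (1 + Real.exp (-t) * (p / (1 - p))) ^ Fintype.card I
        + t ^ 2 * ((∑ q ∈ Finset.univ.offDiag, cov μ (X q.1) (X q.2)) / 2) :=
      add_le_add (le_of_eq (by rw [hbase, mul_pow])) hlast
end

section
/- Let $X_1, \ldots, X_n$ be positively associated, square-integrable random variables such that $X_i \le \kappa$ almost surely for all $i$ and some $\kappa > 0$. Then for every $t > 0$, $\Big| \mathbb{E}\big[e^{t \sum_{i=1}^n X_i}\big] - \prod_{i=1}^n \mathbb{E}\big[e^{t X_i}\big] \Big| \le t^2 e^{n t \kappa} \sum_{1 \le i < j \le n} \mathrm{Cov}(X_i, X_j)$. -/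
open MeasureTheory ProbabilityTheory Finset Filter Real Topology

section Helpers
variable {Ω : Type*} [MeasurableSpace Ω] {μ : Measure Ω}

lemma integrable_mul_of_L2 {f g : Ω → ℝ} (hf : MemLp f 2 μ) (hg : MemLp g 2 μ) :
    Integrable (fun ω => f ω * g ω) μ := by
  refine Integrable.mono' (((hf.integrable_sq.add hg.integrable_sq)).div_const 2)
    (hf.aestronglyMeasurable.mul hg.aestronglyMeasurable) (Eventually.of_forall fun ω => ?_)
  have : |f ω * g ω| ≤ (f ω ^ 2 + g ω ^ 2) / 2 := by
    rcases abs_cases (f ω * g ω) with ⟨h, _⟩ | ⟨h, _⟩ <;> nlinarith [sq_nonneg (f ω - g ω), sq_nonneg (f ω + g ω)]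
  rw [Real.norm_eq_abs]; exact this

lemma integrable_of_abs_le [IsFiniteMeasure μ] {f : Ω → ℝ} (hm : AEStronglyMeasurable f μ)
    {C : ℝ} (h : ∀ ω, |f ω| ≤ C) : Integrable f μ :=
  ⟨hm, HasFiniteIntegral.of_bounded (C := C) (Eventually.of_forall h)⟩

lemma tendsto_max_neg (a : ℝ) : Tendsto (fun M : ℕ => max a (-(M : ℝ))) atTop (𝓝 a) := by
  obtain ⟨N, hN⟩ := exists_nat_ge (-a)
  refine tendsto_const_nhds.congr' ?_
  filter_upwards [eventually_ge_atTop N] with M hM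
  have h1 : -(M : ℝ) ≤ a := by
    have : (N : ℝ) ≤ M := Nat.cast_le.2 hM
    linarith
  simp [max_eq_left h1]

lemma tendsto_cov_of_dominated {F G : ℕ → Ω → ℝ} {f g bf bg : Ω → ℝ}
    (hF : ∀ M, AEStronglyMeasurable (F M) μ) (hG : ∀ M, AEStronglyMeasurable (G M) μ)
    (hbf : Integrable bf μ) (hbg : Integrable bg μ)
    (hbfg : Integrable (fun ω => bf ω * bg ω) μ)
    (hFb : ∀ M ω, |F M ω| ≤ bf ω) (hGb : ∀ M ω, |G M ω| ≤ bg ω)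
    (hFl : ∀ ω, Tendsto (fun M => F M ω) atTop (𝓝 (f ω)))
    (hGl : ∀ ω, Tendsto (fun M => G M ω) atTop (𝓝 (g ω))) :
    Tendsto (fun M => cov μ (F M) (G M)) atTop (𝓝 (cov μ f g)) := by
  have h1 : Tendsto (fun M => ∫ ω, F M ω * G M ω ∂μ) atTop (𝓝 (∫ ω, f ω * g ω ∂μ)) := by
    refine tendsto_integral_of_dominated_convergence (fun ω => bf ω * bg ω)
      (fun M => (hF M).mul (hG M)) hbfg (fun M => Eventually.of_forall fun ω => ?_)
      (Eventually.of_forall fun ω => (hFl ω).mul (hGl ω))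
    rw [Real.norm_eq_abs, abs_mul]
    exact mul_le_mul (hFb M ω) (hGb M ω) (abs_nonneg _)
      ((abs_nonneg _).trans (hFb M ω))
  have h2 : Tendsto (fun M => ∫ ω, F M ω ∂μ) atTop (𝓝 (∫ ω, f ω ∂μ)) :=
    tendsto_integral_of_dominated_convergence bf hF hbf
      (fun M => Eventually.of_forall fun ω => (Real.norm_eq_abs _).trans_le (hFb M ω))
      (Eventually.of_forall hFl)
  have h3 : Tendsto (fun M => ∫ ω, G M ω ∂μ) atTop (𝓝 (∫ ω, g ω ∂μ)) :=
    tendsto_integral_of_dominated_convergence bg hG hbg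
      (fun M => Eventually.of_forall fun ω => (Real.norm_eq_abs _).trans_le (hGb M ω))
      (Eventually.of_forall hGl)
  exact h1.sub (h2.mul h3)

lemma cov_sub_left {f g h : Ω → ℝ} (hf : Integrable f μ) (hg : Integrable g μ)
    (hfh : Integrable (fun ω => f ω * h ω) μ) (hgh : Integrable (fun ω => g ω * h ω) μ) :
    cov μ (fun ω => f ω - g ω) h = cov μ f h - cov μ g h := by
  unfold cov
  simp only [sub_mul]
  rw [integral_sub hfh hgh, integral_sub hf hg]
  ring

lemma cov_const_mul_left (a : ℝ) (f h : Ω → ℝ) :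
    cov μ (fun ω => a * f ω) h = a * cov μ f h := by
  unfold cov
  simp only [mul_assoc]
  rw [integral_const_mul, integral_const_mul]
  ring

lemma cov_sub_right {f g h : Ω → ℝ} (hg : Integrable g μ) (hh : Integrable h μ)
    (hfg : Integrable (fun ω => f ω * g ω) μ) (hfh : Integrable (fun ω => f ω * h ω) μ) :
    cov μ f (fun ω => g ω - h ω) = cov μ f g - cov μ f h := by
  unfold cov
  simp only [mul_sub]
  rw [integral_sub hfg hfh, integral_sub hg hh]
  ring

lemma cov_const_mul_right (a : ℝ) (f h : Ω → ℝ) :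
    cov μ f (fun ω => a * h ω) = a * cov μ f h := by
  unfold cov
  have : ∀ ω, f ω * (a * h ω) = a * (f ω * h ω) := fun ω => by ring
  simp only [this]
  rw [integral_const_mul, integral_const_mul]
  ring

lemma exp_sub_exp_le {a b : ℝ} (h : a ≤ b) : Real.exp b - Real.exp a ≤ Real.exp b * (b - a) := by
  have h1 := Real.add_one_le_exp (a - b)
  have h2 : Real.exp (a - b) * Real.exp b = Real.exp a := by
    rw [← Real.exp_add]; ring_nf
  nlinarith [Real.exp_pos b]

end Helpers

noncomputable def clamp (B : ℝ) (M : ℕ) (u : ℝ) : ℝ := max (min u B) (-(M : ℝ))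

section ClampLemmas
variable {B : ℝ} {M : ℕ} {u : ℝ}

lemma clamp_mono (B : ℝ) (M : ℕ) : Monotone (clamp B M) :=
  fun _ _ h => max_le_max (min_le_min h le_rfl) le_rfl

lemma clamp_meas (B : ℝ) (M : ℕ) : Measurable (clamp B M) :=
  (measurable_id.min measurable_const).max measurable_const

lemma abs_clamp_le (B : ℝ) (M : ℕ) (u : ℝ) : |clamp B M u| ≤ |B| + M := by
  rw [abs_le]
  constructor
  · have : -(M : ℝ) ≤ clamp B M u := le_max_right _ _
    have hB : (0:ℝ) ≤ |B| := abs_nonneg _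
    linarith
  · have h1 : clamp B M u ≤ max B (M : ℝ) := by
      refine max_le ((min_le_right _ _).trans (le_max_left _ _)) ?_
      have : (0:ℝ) ≤ (M:ℝ) := Nat.cast_nonneg _
      exact le_trans (by linarith) (le_max_right _ _)
    refine h1.trans (max_le ?_ ?_)
    · have : (0:ℝ) ≤ (M:ℝ) := Nat.cast_nonneg _
      linarith [le_abs_self B]
    · linarith [abs_nonneg B]

lemma clamp_eq (h : u ≤ B) : clamp B M u = max u (-(M : ℝ)) := by
  rw [clamp, min_eq_left h]

lemma clamp_le_self (hB : 0 ≤ B) : clamp B M u ≤ B :=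
  max_le (min_le_right _ _) (le_trans (by simpa using (Nat.cast_nonneg M : (0:ℝ) ≤ M)) hB)

end ClampLemmas

section MonoLemmas
variable {t B : ℝ} {M : ℕ}

lemma mono_exp_min (ht : 0 < t) (B : ℝ) : Monotone fun u => Real.exp (t * min u B) :=
  fun a b h => Real.exp_le_exp.2 (mul_le_mul_of_nonneg_left (min_le_min h le_rfl) ht.le)

lemma abs_exp_min_le (ht : 0 < t) (B : ℝ) (u : ℝ) : |Real.exp (t * min u B)| ≤ Real.exp (t * B) := by
  rw [abs_of_pos (Real.exp_pos _)]
  exact Real.exp_le_exp.2 (mul_le_mul_of_nonneg_left (min_le_right _ _) ht.le)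

lemma mono_exp_clamp (ht : 0 < t) (B : ℝ) (M : ℕ) :
    Monotone fun u => Real.exp (t * clamp B M u) :=
  fun a b h => Real.exp_le_exp.2 (mul_le_mul_of_nonneg_left (clamp_mono B M h) ht.le)

lemma abs_exp_clamp_le (ht : 0 < t) (hB : 0 ≤ B) (M : ℕ) (u : ℝ) :
    |Real.exp (t * clamp B M u)| ≤ Real.exp (t * B) := by
  rw [abs_of_pos (Real.exp_pos _)]
  exact Real.exp_le_exp.2 (mul_le_mul_of_nonneg_left (clamp_le_self hB) ht.le)

lemma mono_lin_sub_exp (ht : 0 < t) (hB : 0 ≤ B) (M : ℕ) :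
    Monotone fun u => t * Real.exp (t * B) * clamp B M u - Real.exp (t * clamp B M u) := by
  intro a b hab
  have hxy : clamp B M a ≤ clamp B M b := clamp_mono B M hab
  set x := clamp B M a
  set y := clamp B M b
  have hyB : y ≤ B := clamp_le_self hB
  have key : Real.exp (t * y) - Real.exp (t * x) ≤ Real.exp (t * B) * (t * y - t * x) := by
    have h1 : Real.exp (t * y) - Real.exp (t * x) ≤ Real.exp (t * y) * (t * y - t * x) :=
      exp_sub_exp_le (mul_le_mul_of_nonneg_left hxy ht.le)
    have h2 : Real.exp (t * y) * (t * y - t * x) ≤ Real.exp (t * B) * (t * y - t * x) := by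
      have he : Real.exp (t * y) ≤ Real.exp (t * B) :=
        Real.exp_le_exp.2 (mul_le_mul_of_nonneg_left hyB ht.le)
      have hd : 0 ≤ t * y - t * x := by nlinarith
      nlinarith
    linarith
  simp only
  nlinarith [key]

lemma abs_lin_sub_exp_le (ht : 0 < t) (hB : 0 ≤ B) (M : ℕ) (u : ℝ) :
    |t * Real.exp (t * B) * clamp B M u - Real.exp (t * clamp B M u)| ≤
      t * Real.exp (t * B) * (|B| + M) + Real.exp (t * B) := by
  refine (abs_sub _ _).trans ?_
  gcongr
  · rw [abs_mul]
    have h1 : |t * Real.exp (t * B)| = t * Real.exp (t * B) := abs_of_pos (by positivity)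
    rw [h1]
    have := abs_clamp_le B M u
    have hpos : (0:ℝ) ≤ t * Real.exp (t * B) := by positivity
    exact mul_le_mul_of_nonneg_left this hpos
  · exact abs_exp_clamp_le ht hB M u

end MonoLemmas

section Main
variable {Ω : Type*} [MeasurableSpace Ω] {μ : Measure Ω} [IsProbabilityMeasure μ]
  {n : ℕ} {X : Fin n → Ω → ℝ} {κ t : ℝ}

lemma pa_comp (hassoc : PosAssoc μ X) (s : Finset (Fin n)) (m : Fin n) (H K : ℝ → ℝ)
    (hHme : Measurable H) (hKme : Measurable K)
    (hHb : ∃ C, ∀ u, |H u| ≤ C) (hKb : ∃ C, ∀ u, |K u| ≤ C)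
    (hH : Monotone H) (hK : Monotone K) :
    0 ≤ cov μ (fun ω => H (∑ i ∈ s, X i ω)) (fun ω => K (X m ω)) := by
  have h := hassoc (fun x => H (∑ i ∈ s, x i)) (fun x => K (x m))
    (hHme.comp (Finset.measurable_sum s fun i _ => measurable_pi_apply i))
    (hKme.comp (measurable_pi_apply m))
    (hHb.imp fun C hC x => hC _) (hKb.imp fun C hC x => hC _)
    (fun a b hab => hH (Finset.sum_le_sum fun i _ => hab i))
    (fun a b hab => hK (hab m))
  exact h

lemma int_mul_bdd {f g : Ω → ℝ} (hf : Measurable f) (hg : Measurable g)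
    {Cf Cg : ℝ} (hCf : ∀ ω, |f ω| ≤ Cf) (hCg : ∀ ω, |g ω| ≤ Cg) :
    Integrable (fun ω => f ω * g ω) μ := by
  refine integrable_of_abs_le ((hf.mul hg).aestronglyMeasurable) (C := Cf * Cg) fun ω => ?_
  rw [abs_mul]
  exact mul_le_mul (hCf ω) (hCg ω) (abs_nonneg _) ((abs_nonneg _).trans (hCf ω))

lemma abs_max_neg_le (a : ℝ) (M : ℕ) : |max a (-(M : ℝ))| ≤ |a| := by
  rcases le_or_gt (-(M : ℝ)) a with h | h
  · rw [max_eq_left h]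
  · rw [max_eq_right h.le]
    have hM : (0:ℝ) ≤ (M:ℝ) := Nat.cast_nonneg _
    rw [abs_of_nonpos (by linarith), abs_of_nonpos (by linarith : a ≤ 0)]
    linarith

lemma cov_nonneg_sum (hassoc : PosAssoc μ X) (hmeas : ∀ i, Measurable (X i))
    (hL2 : ∀ i, MemLp (X i) 2 μ) (hκ : 0 < κ)
    (hbdd : ∀ i ω, X i ω ≤ κ) (s : Finset (Fin n)) (m : Fin n) :
    0 ≤ cov μ (fun ω => ∑ i ∈ s, X i ω) (X m) := by
  set B : ℝ := s.card * κ with hBdef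
  have hB : 0 ≤ B := by positivity
  have hS : ∀ ω, ∑ i ∈ s, X i ω ≤ B := fun ω => by
    calc ∑ i ∈ s, X i ω ≤ ∑ _i ∈ s, κ := Finset.sum_le_sum fun i _ => hbdd i ω
    _ = B := by simp [hBdef, mul_comm]
  have hXm : ∀ ω, X m ω ≤ κ := hbdd m
  have hSmeas : Measurable fun ω => ∑ i ∈ s, X i ω :=
    Finset.measurable_sum s fun i _ => hmeas i
  have hSL2 : MemLp (fun ω => ∑ i ∈ s, X i ω) 2 μ := by
    have h := memLp_finset_sum' s fun i (_ : i ∈ s) => hL2 i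
    convert h using 1
    ext ω
    simp
  have habsint : Integrable (fun ω => |∑ i ∈ s, X i ω| * |X m ω|) μ := by
    refine ((integrable_mul_of_L2 hSL2 (hL2 m)).abs).congr (Eventually.of_forall fun ω => ?_)
    exact (abs_mul _ _)
  have htend := tendsto_cov_of_dominated (μ := μ)
    (F := fun M ω => max (∑ i ∈ s, X i ω) (-(M : ℝ)))
    (G := fun M ω => max (X m ω) (-(M : ℝ)))
    (f := fun ω => ∑ i ∈ s, X i ω) (g := X m)
    (fun M => (hSmeas.max measurable_const).aestronglyMeasurable)
    (fun M => ((hmeas m).max measurable_const).aestronglyMeasurable)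
    (hSL2.integrable one_le_two).abs ((hL2 m).integrable one_le_two).abs
    habsint
    (fun M ω => abs_max_neg_le _ M) (fun M ω => abs_max_neg_le _ M)
    (fun ω => tendsto_max_neg _) (fun ω => tendsto_max_neg _)
  refine ge_of_tendsto htend (Eventually.of_forall fun M => ?_)
  have h := pa_comp hassoc s m (clamp B M) (clamp κ M) (clamp_meas B M) (clamp_meas κ M)
    ⟨|B| + M, abs_clamp_le B M⟩ ⟨|κ| + M, abs_clamp_le κ M⟩ (clamp_mono B M) (clamp_mono κ M)
  have e1 : (fun ω => clamp B M (∑ i ∈ s, X i ω)) =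
      fun ω => max (∑ i ∈ s, X i ω) (-(M : ℝ)) := funext fun ω => clamp_eq (hS ω)
  have e2 : (fun ω => clamp κ M (X m ω)) = fun ω => max (X m ω) (-(M : ℝ)) :=
    funext fun ω => clamp_eq (hXm ω)
  rw [e1, e2] at h
  exact h

lemma cov_nonneg_pair (hassoc : PosAssoc μ X) (hmeas : ∀ i, Measurable (X i))
    (hL2 : ∀ i, MemLp (X i) 2 μ) (hκ : 0 < κ)
    (hbdd : ∀ i ω, X i ω ≤ κ) (i j : Fin n) :
    0 ≤ cov μ (X i) (X j) := by
  have h := cov_nonneg_sum hassoc hmeas hL2 hκ hbdd {i} j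
  have e : (fun ω => ∑ k ∈ ({i} : Finset (Fin n)), X k ω) = X i :=
    funext fun ω => Finset.sum_singleton _ _
  rwa [e] at h

lemma cov_sum_left (hL2 : ∀ i, MemLp (X i) 2 μ) (s : Finset (Fin n)) (m : Fin n) :
    cov μ (fun ω => ∑ i ∈ s, X i ω) (X m) = ∑ i ∈ s, cov μ (X i) (X m) := by
  unfold cov
  rw [show (fun ω => (∑ i ∈ s, X i ω) * X m ω) = fun ω => ∑ i ∈ s, X i ω * X m ω from
    funext fun ω => Finset.sum_mul _ _ _]
  rw [integral_finset_sum s (fun i _ => integrable_mul_of_L2 (hL2 i) (hL2 m)),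
    integral_finset_sum s (fun i _ => (hL2 i).integrable one_le_two),
    Finset.sum_mul, ← Finset.sum_sub_distrib]

end Main

section Key
variable {Ω : Type*} [MeasurableSpace Ω] {μ : Measure Ω} [IsProbabilityMeasure μ]
  {n : ℕ} {X : Fin n → Ω → ℝ} {κ t : ℝ}

lemma cov_exp_le (hassoc : PosAssoc μ X) (hmeas : ∀ i, Measurable (X i))
    (hL2 : ∀ i, MemLp (X i) 2 μ) (hκ : 0 < κ) (ht : 0 < t)
    (hbdd : ∀ i ω, X i ω ≤ κ) (s : Finset (Fin n)) (m : Fin n) :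
    cov μ (fun ω => Real.exp (t * ∑ i ∈ s, X i ω)) (fun ω => Real.exp (t * X m ω)) ≤
      (t * Real.exp (t * (s.card * κ))) * (t * Real.exp (t * κ)) *
        cov μ (fun ω => ∑ i ∈ s, X i ω) (X m) := by
  set B : ℝ := s.card * κ with hBdef
  have hB : 0 ≤ B := by positivity
  set S : Ω → ℝ := fun ω => ∑ i ∈ s, X i ω with hSdef
  have hS : ∀ ω, S ω ≤ B := fun ω => by
    calc S ω ≤ ∑ _i ∈ s, κ := Finset.sum_le_sum fun i _ => hbdd i ω
    _ = B := by simp [hBdef, mul_comm]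
  have hXm : ∀ ω, X m ω ≤ κ := hbdd m
  have hSmeas : Measurable S := Finset.measurable_sum s fun i _ => hmeas i
  have hSL2 : MemLp S 2 μ := by
    have h := memLp_finset_sum' s fun i (_ : i ∈ s) => hL2 i
    convert h using 1
    ext ω
    simp [hSdef]
  set Lc : ℝ := t * Real.exp (t * B) with hLc
  set L1 : ℝ := t * Real.exp (t * κ) with hL1
  -- per-M inequality
  have hstep : ∀ M : ℕ,
      cov μ (fun ω => Real.exp (t * max (S ω) (-(M:ℝ))))
            (fun ω => Real.exp (t * max (X m ω) (-(M:ℝ)))) ≤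
        Lc * L1 * cov μ (fun ω => max (S ω) (-(M:ℝ))) (fun ω => max (X m ω) (-(M:ℝ))) := by
    intro M
    set YM : Ω → ℝ := fun ω => max (S ω) (-(M:ℝ)) with hYM
    set ZM : Ω → ℝ := fun ω => max (X m ω) (-(M:ℝ)) with hZM
    set φM : Ω → ℝ := fun ω => Real.exp (t * YM ω) with hφM
    set ψM : Ω → ℝ := fun ω => Real.exp (t * ZM ω) with hψM
    have eY : ∀ ω, clamp B M (S ω) = YM ω := fun ω => clamp_eq (hS ω)
    have eZ : ∀ ω, clamp κ M (X m ω) = ZM ω := fun ω => clamp_eq (hXm ω)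
    -- measurability / bounds
    have hYMme : Measurable YM := hSmeas.max measurable_const
    have hZMme : Measurable ZM := (hmeas m).max measurable_const
    have hφMme : Measurable φM := (Real.measurable_exp.comp (hYMme.const_mul t))
    have hψMme : Measurable ψM := (Real.measurable_exp.comp (hZMme.const_mul t))
    have hYMb : ∀ ω, |YM ω| ≤ |B| + M := fun ω => by
      rw [← eY ω]; exact abs_clamp_le B M (S ω)
    have hZMb : ∀ ω, |ZM ω| ≤ |κ| + M := fun ω => by
      rw [← eZ ω]; exact abs_clamp_le κ M (X m ω)
    have hφMb : ∀ ω, |φM ω| ≤ Real.exp (t * B) := fun ω => by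
      show |Real.exp (t * YM ω)| ≤ _
      rw [← eY ω]
      exact abs_exp_clamp_le ht hB M (S ω)
    have hψMb : ∀ ω, |ψM ω| ≤ Real.exp (t * κ) := fun ω => by
      show |Real.exp (t * ZM ω)| ≤ _
      rw [← eZ ω]
      exact abs_exp_clamp_le ht hκ.le M (X m ω)
    -- integrabilities
    have iY : Integrable YM μ := integrable_of_abs_le hYMme.aestronglyMeasurable hYMb
    have iZ : Integrable ZM μ := integrable_of_abs_le hZMme.aestronglyMeasurable hZMb
    have iφ : Integrable φM μ := integrable_of_abs_le hφMme.aestronglyMeasurable hφMb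
    have iψ : Integrable ψM μ := integrable_of_abs_le hψMme.aestronglyMeasurable hψMb
    have iYZ : Integrable (fun ω => YM ω * ZM ω) μ := int_mul_bdd hYMme hZMme hYMb hZMb
    have iφZ : Integrable (fun ω => φM ω * ZM ω) μ := int_mul_bdd hφMme hZMme hφMb hZMb
    have iφψ : Integrable (fun ω => φM ω * ψM ω) μ := int_mul_bdd hφMme hψMme hφMb hψMb
    -- PA inequality 1
    have h1 : 0 ≤ cov μ (fun ω => Lc * YM ω - φM ω) (fun ω => L1 * ZM ω) := by
      have h := pa_comp hassoc s m
        (fun u => Lc * clamp B M u - Real.exp (t * clamp B M u))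
        (fun u => L1 * clamp κ M u)
        (((clamp_meas B M).const_mul Lc).sub
          (Real.measurable_exp.comp ((clamp_meas B M).const_mul t)))
        ((clamp_meas κ M).const_mul L1)
        ⟨t * Real.exp (t * B) * (|B| + M) + Real.exp (t * B), fun u =>
          abs_lin_sub_exp_le ht hB M u⟩
        ⟨|L1| * (|κ| + M), fun u => by
          rw [abs_mul]
          exact mul_le_mul_of_nonneg_left (abs_clamp_le κ M u) (abs_nonneg _)⟩
        (mono_lin_sub_exp ht hB M)
        (fun a b hab => mul_le_mul_of_nonneg_left (clamp_mono κ M hab) (by positivity))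
      have e1 : (fun ω => Lc * clamp B M (S ω) - Real.exp (t * clamp B M (S ω))) =
          fun ω => Lc * YM ω - φM ω := funext fun ω => by rw [eY ω]
      have e2 : (fun ω => L1 * clamp κ M (X m ω)) = fun ω => L1 * ZM ω :=
        funext fun ω => by rw [eZ ω]
      rw [show (fun ω => Lc * clamp B M (∑ i ∈ s, X i ω) -
            Real.exp (t * clamp B M (∑ i ∈ s, X i ω))) =
          fun ω => Lc * YM ω - φM ω from e1,
        e2] at h
      exact h
    -- PA inequality 2
    have h2 : 0 ≤ cov μ φM (fun ω => L1 * ZM ω - ψM ω) := by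
      have h := pa_comp hassoc s m
        (fun u => Real.exp (t * clamp B M u))
        (fun u => L1 * clamp κ M u - Real.exp (t * clamp κ M u))
        (Real.measurable_exp.comp ((clamp_meas B M).const_mul t))
        (((clamp_meas κ M).const_mul L1).sub
          (Real.measurable_exp.comp ((clamp_meas κ M).const_mul t)))
        ⟨Real.exp (t * B), fun u => abs_exp_clamp_le ht hB M u⟩
        ⟨t * Real.exp (t * κ) * (|κ| + M) + Real.exp (t * κ), fun u =>
          abs_lin_sub_exp_le ht hκ.le M u⟩
        (mono_exp_clamp ht B M)
        (mono_lin_sub_exp ht hκ.le M)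
      have e1 : (fun ω => Real.exp (t * clamp B M (∑ i ∈ s, X i ω))) = φM :=
        funext fun ω => by rw [eY ω]
      have e2 : (fun ω => L1 * clamp κ M (X m ω) - Real.exp (t * clamp κ M (X m ω))) =
          fun ω => L1 * ZM ω - ψM ω := funext fun ω => by rw [eZ ω]
      rw [e1, e2] at h
      exact h
    -- expand covariances
    have iLcY : Integrable (fun ω => Lc * YM ω) μ := iY.const_mul Lc
    have iLcYZ : Integrable (fun ω => (Lc * YM ω) * (L1 * ZM ω)) μ := by
      have : (fun ω => (Lc * YM ω) * (L1 * ZM ω)) = fun ω => (Lc * L1) * (YM ω * ZM ω) :=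
        funext fun ω => by ring
      rw [this]
      exact iYZ.const_mul _
    have iφLZ : Integrable (fun ω => φM ω * (L1 * ZM ω)) μ := by
      have : (fun ω => φM ω * (L1 * ZM ω)) = fun ω => L1 * (φM ω * ZM ω) :=
        funext fun ω => by ring
      rw [this]
      exact iφZ.const_mul _
    have h1' : 0 ≤ Lc * (L1 * cov μ YM ZM) - L1 * cov μ φM ZM := by
      have := h1
      rw [cov_sub_left iLcY iφ iLcYZ iφLZ, cov_const_mul_left,
        cov_const_mul_right, cov_const_mul_right] at this
      linarith
    have h2' : 0 ≤ L1 * cov μ φM ZM - cov μ φM ψM := by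
      have := h2
      rw [cov_sub_right (iZ.const_mul L1) iψ iφLZ iφψ, cov_const_mul_right] at this
      linarith
    calc cov μ φM ψM ≤ L1 * cov μ φM ZM := by linarith
    _ ≤ Lc * (L1 * cov μ YM ZM) := by linarith
    _ = Lc * L1 * cov μ YM ZM := by ring
  -- limits
  have habsint : Integrable (fun ω => |S ω| * |X m ω|) μ :=
    ((integrable_mul_of_L2 hSL2 (hL2 m)).abs).congr (Eventually.of_forall fun ω => abs_mul _ _)
  have htendYZ : Tendsto (fun M : ℕ => cov μ (fun ω => max (S ω) (-(M:ℝ)))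
      (fun ω => max (X m ω) (-(M:ℝ)))) atTop (𝓝 (cov μ S (X m))) :=
    tendsto_cov_of_dominated
      (fun M => (hSmeas.max measurable_const).aestronglyMeasurable)
      (fun M => ((hmeas m).max measurable_const).aestronglyMeasurable)
      (hSL2.integrable one_le_two).abs ((hL2 m).integrable one_le_two).abs
      habsint
      (fun M ω => abs_max_neg_le _ M) (fun M ω => abs_max_neg_le _ M)
      (fun ω => tendsto_max_neg _) (fun ω => tendsto_max_neg _)
  have hconst : Integrable (fun _ : Ω => Real.exp (t * B)) μ := integrable_const _
  have hconst2 : Integrable (fun _ : Ω => Real.exp (t * κ)) μ := integrable_const _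
  have hconstm : Integrable (fun _ : Ω => Real.exp (t * B) * Real.exp (t * κ)) μ :=
    integrable_const _
  have hexp_cont : ∀ a : ℝ, Tendsto (fun M : ℕ => Real.exp (t * max a (-(M:ℝ)))) atTop
      (𝓝 (Real.exp (t * a))) := fun a => by
    have hc : Continuous fun v : ℝ => Real.exp (t * v) :=
      Real.continuous_exp.comp (continuous_const.mul continuous_id)
    exact (hc.tendsto a).comp (tendsto_max_neg a)
  have htendφψ : Tendsto (fun M : ℕ => cov μ (fun ω => Real.exp (t * max (S ω) (-(M:ℝ))))
      (fun ω => Real.exp (t * max (X m ω) (-(M:ℝ))))) atTop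
      (𝓝 (cov μ (fun ω => Real.exp (t * S ω)) (fun ω => Real.exp (t * X m ω)))) := by
    refine tendsto_cov_of_dominated
      (fun M => (Real.measurable_exp.comp
        ((hSmeas.max measurable_const).const_mul t)).aestronglyMeasurable)
      (fun M => (Real.measurable_exp.comp
        (((hmeas m).max measurable_const).const_mul t)).aestronglyMeasurable)
      hconst hconst2 hconstm ?_ ?_ (fun ω => hexp_cont _) (fun ω => hexp_cont _)
    · intro M ω
      rw [← clamp_eq (hS ω)]
      exact abs_exp_clamp_le ht hB M (S ω)
    · intro M ω
      rw [← clamp_eq (hXm ω)]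
      exact abs_exp_clamp_le ht hκ.le M (X m ω)
  exact le_of_tendsto_of_tendsto' htendφψ (htendYZ.const_mul (Lc * L1)) hstep
end Key

section MainAux
variable {Ω : Type*} [MeasurableSpace Ω] {μ : Measure Ω} [IsProbabilityMeasure μ]
  {n : ℕ} {X : Fin n → Ω → ℝ} {κ t : ℝ}

lemma main_aux (hassoc : PosAssoc μ X) (hmeas : ∀ i, Measurable (X i))
    (hL2 : ∀ i, MemLp (X i) 2 μ) (hκ : 0 < κ) (ht : 0 < t)
    (hbdd : ∀ i ω, X i ω ≤ κ) (s : Finset (Fin n)) :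
    |(∫ ω, Real.exp (t * ∑ i ∈ s, X i ω) ∂μ) - ∏ i ∈ s, ∫ ω, Real.exp (t * X i ω) ∂μ| ≤
      t ^ 2 * Real.exp (s.card * t * κ) *
        ∑ i ∈ s, ∑ j ∈ s.filter (fun j => i < j), cov μ (X i) (X j) := by
  induction s using Finset.induction_on_max with
  | empty => simp [integral_const]
  | insert m s' hlt IH =>
    have hm : m ∉ s' := fun hmem => lt_irrefl m (hlt m hmem)
    set c := s'.card with hc
    set S : Ω → ℝ := fun ω => ∑ i ∈ s', X i ω with hSdef
    set B : ℝ := c * κ with hBdef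
    have hB : 0 ≤ B := by positivity
    have hS : ∀ ω, S ω ≤ B := fun ω => by
      calc S ω ≤ ∑ _i ∈ s', κ := Finset.sum_le_sum fun i _ => hbdd i ω
      _ = B := by simp [hBdef, hc, mul_comm]
    have hSmeas : Measurable S := Finset.measurable_sum s' fun i _ => hmeas i
    -- integrability of exponentials
    have hexpS_me : Measurable fun ω => Real.exp (t * S ω) :=
      Real.measurable_exp.comp (hSmeas.const_mul t)
    have hexpm_me : Measurable fun ω => Real.exp (t * X m ω) :=
      Real.measurable_exp.comp ((hmeas m).const_mul t)
    have hexpS_b : ∀ ω, |Real.exp (t * S ω)| ≤ Real.exp (t * B) := fun ω => by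
      rw [abs_of_pos (Real.exp_pos _)]
      exact Real.exp_le_exp.2 (mul_le_mul_of_nonneg_left (hS ω) ht.le)
    have hexpm_b : ∀ ω, |Real.exp (t * X m ω)| ≤ Real.exp (t * κ) := fun ω => by
      rw [abs_of_pos (Real.exp_pos _)]
      exact Real.exp_le_exp.2 (mul_le_mul_of_nonneg_left (hbdd m ω) ht.le)
    have iexpS : Integrable (fun ω => Real.exp (t * S ω)) μ :=
      integrable_of_abs_le hexpS_me.aestronglyMeasurable hexpS_b
    have iexpm : Integrable (fun ω => Real.exp (t * X m ω)) μ :=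
      integrable_of_abs_le hexpm_me.aestronglyMeasurable hexpm_b
    have iprod : Integrable (fun ω => Real.exp (t * S ω) * Real.exp (t * X m ω)) μ :=
      int_mul_bdd hexpS_me hexpm_me hexpS_b hexpm_b
    -- split the integral
    have hsum_ins : ∀ ω, ∑ i ∈ insert m s', X i ω = X m ω + S ω := fun ω =>
      Finset.sum_insert hm
    have hint_ins : (∫ ω, Real.exp (t * ∑ i ∈ insert m s', X i ω) ∂μ) =
        ∫ ω, Real.exp (t * S ω) * Real.exp (t * X m ω) ∂μ := by
      have e : (fun ω => Real.exp (t * ∑ i ∈ insert m s', X i ω)) =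
          fun ω => Real.exp (t * S ω) * Real.exp (t * X m ω) := funext fun ω => by
        rw [hsum_ins ω, ← Real.exp_add]
        congr 1
        ring
      rw [e]
    set A : ℝ := cov μ (fun ω => Real.exp (t * S ω)) (fun ω => Real.exp (t * X m ω)) with hA
    have hcovdef : (∫ ω, Real.exp (t * S ω) * Real.exp (t * X m ω) ∂μ) =
        A + (∫ ω, Real.exp (t * S ω) ∂μ) * ∫ ω, Real.exp (t * X m ω) ∂μ := by
      rw [hA]; unfold cov; ring
    have hprod_ins : (∏ i ∈ insert m s', ∫ ω, Real.exp (t * X i ω) ∂μ) =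
        (∫ ω, Real.exp (t * X m ω) ∂μ) * ∏ i ∈ s', ∫ ω, Real.exp (t * X i ω) ∂μ :=
      Finset.prod_insert hm
    set Em : ℝ := ∫ ω, Real.exp (t * X m ω) ∂μ with hEm
    set ES : ℝ := ∫ ω, Real.exp (t * S ω) ∂μ with hES
    set P : ℝ := ∏ i ∈ s', ∫ ω, Real.exp (t * X i ω) ∂μ with hP
    have hEm_nonneg : 0 ≤ Em := integral_nonneg fun ω => (Real.exp_pos _).le
    have hEm_le : Em ≤ Real.exp (t * κ) := by
      rw [hEm]
      calc (∫ ω, Real.exp (t * X m ω) ∂μ) ≤ ∫ _ω, Real.exp (t * κ) ∂μ :=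
        integral_mono iexpm (integrable_const _) fun ω =>
          Real.exp_le_exp.2 (mul_le_mul_of_nonneg_left (hbdd m ω) ht.le)
      _ = Real.exp (t * κ) := by simp
    -- bound on A
    have hA0 : 0 ≤ A := by
      rw [hA]
      have h := pa_comp hassoc s' m (fun u => Real.exp (t * min u B))
        (fun u => Real.exp (t * min u κ))
        (Real.measurable_exp.comp ((measurable_id.min measurable_const).const_mul t))
        (Real.measurable_exp.comp ((measurable_id.min measurable_const).const_mul t))
        ⟨Real.exp (t * B), abs_exp_min_le ht B⟩ ⟨Real.exp (t * κ), abs_exp_min_le ht κ⟩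
        (mono_exp_min ht B) (mono_exp_min ht κ)
      have e1 : (fun ω => Real.exp (t * min (∑ i ∈ s', X i ω) B)) =
          fun ω => Real.exp (t * S ω) := funext fun ω => by rw [min_eq_left (hS ω)]
      have e2 : (fun ω => Real.exp (t * min (X m ω) κ)) =
          fun ω => Real.exp (t * X m ω) := funext fun ω => by rw [min_eq_left (hbdd m ω)]
      rw [e1, e2] at h
      exact h
    have hA1 : A ≤ t ^ 2 * Real.exp ((c + 1) * t * κ) * ∑ i ∈ s', cov μ (X i) (X m) := by
      have h := cov_exp_le hassoc hmeas hL2 hκ ht hbdd s' m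
      rw [cov_sum_left hL2 s' m] at h
      have e : (t * Real.exp (t * (c * κ))) * (t * Real.exp (t * κ)) =
          t ^ 2 * Real.exp ((c + 1) * t * κ) := by
        rw [show (t * Real.exp (t * ((c:ℝ) * κ))) * (t * Real.exp (t * κ)) =
          t ^ 2 * (Real.exp (t * ((c:ℝ) * κ)) * Real.exp (t * κ)) from by ring, ← Real.exp_add]
        congr 1
        ring
      rw [e] at h
      exact h
    -- nonnegativity of sums of covariances
    have hSig1 : 0 ≤ ∑ i ∈ s', cov μ (X i) (X m) :=
      Finset.sum_nonneg fun i _ => cov_nonneg_pair hassoc hmeas hL2 hκ hbdd i m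
    have hSig2 : 0 ≤ ∑ i ∈ s', ∑ j ∈ s'.filter (fun j => i < j), cov μ (X i) (X j) :=
      Finset.sum_nonneg fun i _ => Finset.sum_nonneg fun j _ =>
        cov_nonneg_pair hassoc hmeas hL2 hκ hbdd i j
    -- sum decomposition for RHS
    have hsum_dec : ∑ i ∈ insert m s', ∑ j ∈ (insert m s').filter (fun j => i < j),
        cov μ (X i) (X j) =
        (∑ i ∈ s', cov μ (X i) (X m)) +
          ∑ i ∈ s', ∑ j ∈ s'.filter (fun j => i < j), cov μ (X i) (X j) := by
      rw [Finset.sum_insert hm]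
      have hfm : (insert m s').filter (fun j => m < j) = ∅ := by
        ext j
        simp only [Finset.mem_filter, Finset.mem_insert, Finset.notMem_empty, iff_false]
        rintro ⟨hj | hj, hlt'⟩
        · exact lt_irrefl m (hj ▸ hlt')
        · exact absurd hlt' (not_lt.2 (hlt j hj).le)
      rw [hfm]
      simp only [Finset.sum_empty, zero_add]
      have hfi : ∀ i ∈ s', (insert m s').filter (fun j => i < j) =
          insert m (s'.filter (fun j => i < j)) := by
        intro i hi
        ext j
        simp only [Finset.mem_filter, Finset.mem_insert]
        constructor
        · rintro ⟨hj | hj, hlt'⟩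
          · exact Or.inl hj
          · exact Or.inr ⟨hj, hlt'⟩
        · rintro (hj | ⟨hj, hlt'⟩)
          · exact ⟨Or.inl hj, hj ▸ hlt i hi⟩
          · exact ⟨Or.inr hj, hlt'⟩
      rw [Finset.sum_congr rfl fun i hi => by
        rw [hfi i hi, Finset.sum_insert (fun hc' => hm (Finset.mem_filter.1 hc').1)]]
      rw [Finset.sum_add_distrib]
    -- cardinality
    have hcard : (insert m s').card = c + 1 := Finset.card_insert_of_notMem hm
    -- put it together
    have hIH := IH
    calc |(∫ ω, Real.exp (t * ∑ i ∈ insert m s', X i ω) ∂μ) -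
        ∏ i ∈ insert m s', ∫ ω, Real.exp (t * X i ω) ∂μ|
        = |A + Em * (ES - P)| := by
          rw [hint_ins, hcovdef, hprod_ins]
          ring_nf
      _ ≤ |A| + |Em * (ES - P)| := abs_add_le _ _
      _ = A + Em * |ES - P| := by
          rw [abs_of_nonneg hA0, abs_mul, abs_of_nonneg hEm_nonneg]
      _ ≤ (t ^ 2 * Real.exp ((c + 1) * t * κ) * ∑ i ∈ s', cov μ (X i) (X m)) +
          Real.exp (t * κ) * (t ^ 2 * Real.exp (c * t * κ) *
            ∑ i ∈ s', ∑ j ∈ s'.filter (fun j => i < j), cov μ (X i) (X j)) := by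
          refine add_le_add hA1 ?_
          refine mul_le_mul hEm_le hIH (abs_nonneg _) (Real.exp_pos _).le
      _ = t ^ 2 * Real.exp ((c + 1) * t * κ) *
          ((∑ i ∈ s', cov μ (X i) (X m)) +
            ∑ i ∈ s', ∑ j ∈ s'.filter (fun j => i < j), cov μ (X i) (X j)) := by
          rw [show Real.exp (t * κ) * (t ^ 2 * Real.exp (c * t * κ) *
              (∑ i ∈ s', ∑ j ∈ s'.filter (fun j => i < j), cov μ (X i) (X j))) =
            t ^ 2 * (Real.exp (t * κ) * Real.exp (c * t * κ)) *
              (∑ i ∈ s', ∑ j ∈ s'.filter (fun j => i < j), cov μ (X i) (X j)) from by ring]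
          rw [← Real.exp_add]
          ring_nf
      _ = t ^ 2 * Real.exp ((insert m s').card * t * κ) *
          ∑ i ∈ insert m s', ∑ j ∈ (insert m s').filter (fun j => i < j),
            cov μ (X i) (X j) := by
          rw [hsum_dec, hcard]
          push_cast
          ring_nf

end MainAux

theorem stmt2 {Ω : Type*} [MeasurableSpace Ω] (μ : Measure Ω) [IsProbabilityMeasure μ]
    {n : ℕ} (X : Fin n → Ω → ℝ)
    (hmeas : ∀ i, Measurable (X i))
    (hL2 : ∀ i, MemLp (X i) 2 μ)
    (hassoc : PosAssoc μ X)
    (κ : ℝ) (hκ : 0 < κ) (hbdd : ∀ i, ∀ᵐ ω ∂μ, X i ω ≤ κ)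
    (t : ℝ) (ht : 0 < t) :
    |(∫ ω, Real.exp (t * ∑ i, X i ω) ∂μ) - ∏ i, ∫ ω, Real.exp (t * X i ω) ∂μ| ≤
      t ^ 2 * Real.exp (n * t * κ) * ∑ i, ∑ j ∈ Finset.Ioi i, cov μ (X i) (X j) := by
  set X' : Fin n → Ω → ℝ := fun i ω => min (X i ω) κ with hX'
  have hmeas' : ∀ i, Measurable (X' i) := fun i => (hmeas i).min measurable_const
  have hL2' : ∀ i, MemLp (X' i) 2 μ := by
    intro i
    refine MemLp.of_le (((hL2 i).norm).add (memLp_const κ)) ((hmeas' i).aestronglyMeasurable)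
      (Eventually.of_forall fun ω => ?_)
    simp only [Real.norm_eq_abs]
    have h1 : |min (X i ω) κ| ≤ |X i ω| + κ := by
      rcases le_or_gt (X i ω) κ with h | h
      · rw [min_eq_left h]; linarith [abs_nonneg (X i ω), hκ]
      · rw [min_eq_right h.le, abs_of_pos hκ]; linarith [abs_nonneg (X i ω)]
    refine h1.trans ?_
    have h2 := le_abs_self (|X i ω| + κ)
    simpa [Pi.add_apply] using h2
  have hassoc' : PosAssoc μ X' := by
    intro f g fm gm fb gb fmono gmono
    have h := hassoc (fun x => f (fun i => min (x i) κ)) (fun x => g (fun i => min (x i) κ))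
      (fm.comp (measurable_pi_lambda _ fun i => (measurable_pi_apply i).min measurable_const))
      (gm.comp (measurable_pi_lambda _ fun i => (measurable_pi_apply i).min measurable_const))
      (fb.imp fun C hC x => hC _) (gb.imp fun C hC x => hC _)
      (fun a b hab => fmono fun i => min_le_min (hab i) le_rfl)
      (fun a b hab => gmono fun i => min_le_min (hab i) le_rfl)
    exact h
  have hbdd' : ∀ i ω, X' i ω ≤ κ := fun i ω => min_le_right _ _
  have hae : ∀ᵐ ω ∂μ, ∀ i, X' i ω = X i ω := by
    filter_upwards [ae_all_iff.2 hbdd] with ω h i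
    exact min_eq_left (h i)
  have key := main_aux hassoc' hmeas' hL2' hκ ht hbdd' Finset.univ
  -- transfer each piece
  have e1 : (∫ ω, Real.exp (t * ∑ i, X' i ω) ∂μ) = ∫ ω, Real.exp (t * ∑ i, X i ω) ∂μ := by
    refine integral_congr_ae ?_
    filter_upwards [hae] with ω h
    rw [Finset.sum_congr rfl fun i _ => h i]
  have e2 : ∀ i : Fin n, (∫ ω, Real.exp (t * X' i ω) ∂μ) = ∫ ω, Real.exp (t * X i ω) ∂μ := by
    intro i
    refine integral_congr_ae ?_
    filter_upwards [hae] with ω h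
    rw [h i]
  have e3 : ∀ i j : Fin n, cov μ (X' i) (X' j) = cov μ (X i) (X j) := by
    intro i j
    unfold cov
    congr 1
    · refine integral_congr_ae ?_
      filter_upwards [hae] with ω h
      rw [h i, h j]
    · congr 1 <;> refine integral_congr_ae ?_ <;> (filter_upwards [hae] with ω h)
      · rw [h i]
      · rw [h j]
  rw [e1] at key
  rw [Finset.prod_congr rfl fun i _ => e2 i] at key
  have e4 : ∑ i, ∑ j ∈ Finset.univ.filter (fun j => i < j), cov μ (X' i) (X' j) =
      ∑ i, ∑ j ∈ Finset.Ioi i, cov μ (X i) (X j) := by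
    refine Finset.sum_congr rfl fun i _ => ?_
    rw [show Finset.univ.filter (fun j => i < j) = Finset.Ioi i from
      Finset.ext fun j => by simp [Finset.mem_Ioi]]
    exact Finset.sum_congr rfl fun j _ => e3 i j
  rw [e4] at key
  have e5 : ((Finset.univ : Finset (Fin n)).card : ℝ) = n := by simp
  rw [e5] at key
  exact key
end

section
/- Let $(X_i)_{i \in I}$ be a finite family of positively associated random variables, each taking values in $\{0,1\}$. Then $\mathbb{P}\big(\sum_{i \in I} X_i = 0\big) \ge \prod_{i \in I} \mathbb{P}(X_i = 0)$. -/
open MeasureTheory ProbabilityTheory Finset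

theorem stmt4 {Ω : Type*} [MeasurableSpace Ω] (μ : Measure Ω) [IsProbabilityMeasure μ]
    {I : Type*} [Fintype I] (X : I → Ω → ℝ)
    (hmeas : ∀ i, Measurable (X i))
    (h01 : ∀ i ω, X i ω = 0 ∨ X i ω = 1)
    (hassoc : PosAssoc μ X) :
    ∏ i, (μ {ω | X i ω = 0}).toReal ≤ (μ {ω | ∑ i, X i ω = 0}).toReal := by
  classical
  have hZmeas : ∀ s : Finset I, MeasurableSet {ω | ∀ i ∈ s, X i ω = 0} := by
    intro s
    have : {ω | ∀ i ∈ s, X i ω = 0} = ⋂ i ∈ s, (X i) ⁻¹' {0} := by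
      ext ω; simp [Set.mem_iInter]
    rw [this]
    exact MeasurableSet.biInter s.countable_toSet fun i _ =>
      (hmeas i) (measurableSet_singleton 0)
  have hcompl : ∀ (S : Set Ω), MeasurableSet S → (μ Sᶜ).toReal = 1 - (μ S).toReal := by
    intro S hS
    rw [measure_compl hS (measure_ne_top μ S), measure_univ,
      ENNReal.toReal_sub_of_le prob_le_one ENNReal.one_ne_top]
    simp
  have key : ∀ s : Finset I,
      ∏ i ∈ s, (μ {ω | X i ω = 0}).toReal ≤ (μ {ω | ∀ i ∈ s, X i ω = 0}).toReal := by
    intro s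
    induction s using Finset.cons_induction with
    | empty =>
      have : {ω : Ω | ∀ i ∈ (∅ : Finset I), X i ω = 0} = Set.univ := by ext ω; simp
      rw [Finset.prod_empty, this, measure_univ]; simp
    | cons j s hjs ih =>
      set f : (I → ℝ) → ℝ := fun x => min (max (x j) 0) 1 with hf
      set g : (I → ℝ) → ℝ := fun x => min (max (∑ i ∈ s, x i) 0) 1 with hg
      have hfm : Measurable f :=
        ((measurable_pi_apply j).max measurable_const).min measurable_const
      have hgm : Measurable g :=
        ((Finset.measurable_sum s fun i _ => measurable_pi_apply i).max
          measurable_const).min measurable_const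
      have hfnn : ∀ x, (0:ℝ) ≤ f x := fun x => le_min (le_max_right _ _) zero_le_one
      have hgnn : ∀ x, (0:ℝ) ≤ g x := fun x => le_min (le_max_right _ _) zero_le_one
      have hfb : ∃ C, ∀ x, |f x| ≤ C :=
        ⟨1, fun x => abs_le.2 ⟨by linarith [hfnn x], min_le_right _ _⟩⟩
      have hgb : ∃ C, ∀ x, |g x| ≤ C :=
        ⟨1, fun x => abs_le.2 ⟨by linarith [hgnn x], min_le_right _ _⟩⟩
      have hfmono : Monotone f := fun x y h =>
        min_le_min (max_le_max (h j) le_rfl) le_rfl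
      have hgmono : Monotone g := fun x y h =>
        min_le_min (max_le_max (Finset.sum_le_sum fun i _ => h i) le_rfl) le_rfl
      have hcov := hassoc f g hfm hgm hfb hgb hfmono hgmono
      set T : Set Ω := {ω | X j ω = 1} with hT
      set U : Set Ω := {ω | ∀ i ∈ s, X i ω = 0}ᶜ with hU
      have hTmeas : MeasurableSet T := (hmeas j) (measurableSet_singleton 1)
      have hUmeas : MeasurableSet U := (hZmeas s).compl
      have hFeq : (fun ω => f (fun i => X i ω)) = T.indicator (fun _ => (1:ℝ)) := by
        funext ω
        rcases h01 j ω with h | h <;>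
          simp [hf, hT, h, Set.indicator_apply]
      have hGeq : (fun ω => g (fun i => X i ω)) = U.indicator (fun _ => (1:ℝ)) := by
        funext ω
        by_cases hω : ∀ i ∈ s, X i ω = 0
        · have hsum : ∑ i ∈ s, X i ω = 0 := Finset.sum_eq_zero hω
          have hmemU : ω ∉ U := fun h => h hω
          rw [Set.indicator_of_notMem hmemU]
          simp [hg, hsum]
        · obtain ⟨i, hi, hne⟩ := by
            push_neg at hω; exact hω
          have hX1 : X i ω = 1 := (h01 i ω).resolve_left hne
          have hone : (1:ℝ) ≤ ∑ i ∈ s, X i ω := by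
            have := Finset.single_le_sum (f := fun i => X i ω)
              (fun i _ => by rcases h01 i ω with h | h <;> simp [h]) hi
            simpa [hX1] using this
          have : g (fun i => X i ω) = 1 := by
            simp only [hg]
            exact min_eq_right (le_max_of_le_left hone)
          rw [this]
          simp [hU, Set.indicator_apply, hω]
      rw [hFeq, hGeq] at hcov
      unfold cov at hcov
      have hprod : ∀ ω, T.indicator (fun _ => (1:ℝ)) ω * U.indicator (fun _ => (1:ℝ)) ω
          = (T ∩ U).indicator (fun _ => (1:ℝ)) ω := by
        intro ω
        rw [← Set.inter_indicator_mul]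
        simp
      have h1 : ∫ ω, T.indicator (fun _ => (1:ℝ)) ω ∂μ = (μ T).toReal := by
        rw [integral_indicator_const _ hTmeas]; simp; rfl
      have h2 : ∫ ω, U.indicator (fun _ => (1:ℝ)) ω ∂μ = (μ U).toReal := by
        rw [integral_indicator_const _ hUmeas]; simp; rfl
      have h3 : ∫ ω, T.indicator (fun _ => (1:ℝ)) ω * U.indicator (fun _ => (1:ℝ)) ω ∂μ
          = (μ (T ∩ U)).toReal := by
        simp_rw [hprod]
        rw [integral_indicator_const _ (hTmeas.inter hUmeas)]; simp; rfl
      rw [h1, h2, h3] at hcov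
      -- hcov : 0 ≤ (μ (T ∩ U)).toReal - (μ T).toReal * (μ U).toReal
      set t := (μ T).toReal
      set u := (μ U).toReal
      set c := (μ (T ∩ U)).toReal
      have hincl : (μ (Tᶜ ∩ Uᶜ)).toReal = 1 - t - u + c := by
        have hie := measure_union_add_inter (μ := μ) T hUmeas
        have hieR : (μ (T ∪ U)).toReal + c = t + u := by
          have := congrArg ENNReal.toReal hie
          rwa [ENNReal.toReal_add (measure_ne_top _ _) (measure_ne_top _ _),
            ENNReal.toReal_add (measure_ne_top _ _) (measure_ne_top _ _)] at this
        have hcomp : (μ (Tᶜ ∩ Uᶜ)).toReal = 1 - (μ (T ∪ U)).toReal := by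
          rw [← Set.compl_union]
          exact hcompl _ (hTmeas.union hUmeas)
        rw [hcomp]; linarith
      have hset : {ω | ∀ i ∈ Finset.cons j s hjs, X i ω = 0} = Tᶜ ∩ Uᶜ := by
        ext ω
        simp only [Set.mem_inter_iff, Set.mem_compl_iff, hT, hU, Set.mem_setOf_eq,
          compl_compl, Finset.mem_cons]
        constructor
        · intro h
          refine ⟨?_, fun i hi => h i (Or.inr hi)⟩
          have := h j (Or.inl rfl)
          rw [this]; norm_num
        · rintro ⟨h1, h2⟩
          rintro i (rfl | hi)
          · exact (h01 i ω).resolve_right h1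
          · exact h2 i hi
      have hTc : (μ {ω | X j ω = 0}).toReal = 1 - t := by
        have : {ω | X j ω = 0} = Tᶜ := by
          ext ω
          simp only [hT, Set.mem_compl_iff, Set.mem_setOf_eq]
          constructor
          · intro h h'; rw [h] at h'; norm_num at h'
          · intro h; exact (h01 j ω).resolve_right h
        rw [this, hcompl _ hTmeas]
      have hUc : (μ {ω | ∀ i ∈ s, X i ω = 0}).toReal = 1 - u := by
        have : {ω | ∀ i ∈ s, X i ω = 0} = Uᶜ := by rw [hU, compl_compl]
        rw [this, hcompl _ hUmeas]
      rw [Finset.prod_cons, hset, hincl, hTc]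
      have hstep : (1 - t) * (1 - u) ≤ 1 - t - u + c := by nlinarith
      have hnn : (0:ℝ) ≤ 1 - t := by
        rw [← hTc]; exact ENNReal.toReal_nonneg
      calc (1 - t) * ∏ i ∈ s, (μ {ω | X i ω = 0}).toReal
          ≤ (1 - t) * (1 - u) := by
            rw [← hUc] at *
            exact mul_le_mul_of_nonneg_left ih hnn
        _ ≤ 1 - t - u + c := hstep
  have hfinal : {ω | ∑ i, X i ω = 0} = {ω | ∀ i ∈ Finset.univ, X i ω = 0} := by
    ext ω
    simp only [Set.mem_setOf_eq]
    rw [Finset.sum_eq_zero_iff_of_nonneg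
      (fun i _ => by rcases h01 i ω with h | h <;> simp [h])]
  rw [hfinal]
  simpa using key Finset.univ
end

section
/- Let $Y_1, \ldots, Y_n$ be i.i.d. random variables with $\mathbb{P}(Y_i = 1) = p = 1 - \mathbb{P}(Y_i = 0)$, where $0 < p < 1$, let $k \ge 2$ with $n \ge 2k$, define the cyclic $k$-run indicators $Z_i = \prod_{j=0}^{k-1} Y_{((i+j-1) \bmod n) + 1}$ for $1 \le i \le n$, and let $Z = \sum_{i=1}^n Z_i$ be the number of cyclic $k$-runs. Then for every $t > 0$, $\mathbb{P}(Z = 0) \le (1 - p^k)^n \Big(1 + e^{-t}\frac{p^k}{1 - p^k}\Big)^n + t^2\, n \sum_{j=1}^{k-1} p^{k+j}$. -/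
open MeasureTheory ProbabilityTheory Finset

lemma aux_prod01 {ι : Type*} (T : Finset ι) (f : ι → ℝ) (h : ∀ i ∈ T, f i = 0 ∨ f i = 1) :
    (∏ i ∈ T, f i) = 0 ∨ (∏ i ∈ T, f i) = 1 := by
  classical
  induction T using Finset.induction_on with
  | empty => simp
  | @insert a T' hni ih =>
    rw [Finset.prod_insert hni]
    rcases h a (Finset.mem_insert_self _ _) with h0 | h1
    · left; simp [h0]
    · rcases ih (fun i hi => h i (Finset.mem_insert_of_mem hi)) with h0 | h1'
      · left; simp [h0]
      · right; simp [h1, h1']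

lemma aux_integrable {Ω : Type*} [MeasurableSpace Ω] (μ : Measure Ω) [IsFiniteMeasure μ]
    {f : Ω → ℝ} (hf : Measurable f) (C : ℝ) (h : ∀ ω, |f ω| ≤ C) : Integrable f μ :=
  (integrable_const C).mono' hf.aestronglyMeasurable (Filter.Eventually.of_forall
    (fun ω => by rw [Real.norm_eq_abs]; exact h ω))

lemma aux_weier {ι : Type*} (T : Finset ι) (c : ι → ℝ) (h0 : ∀ i ∈ T, 0 ≤ c i)
    (h1 : ∀ i ∈ T, c i ≤ 1) : 1 - ∑ i ∈ T, c i ≤ ∏ i ∈ T, (1 - c i) := by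
  classical
  induction T using Finset.induction_on with
  | empty => simp
  | @insert a T' hni ih =>
    rw [Finset.prod_insert hni, Finset.sum_insert hni]
    have hT0 : ∀ i ∈ T', 0 ≤ c i := fun i hi => h0 i (Finset.mem_insert_of_mem hi)
    have hT1 : ∀ i ∈ T', c i ≤ 1 := fun i hi => h1 i (Finset.mem_insert_of_mem hi)
    have ihh := ih hT0 hT1
    have ha0 := h0 a (Finset.mem_insert_self _ _)
    have ha1 := h1 a (Finset.mem_insert_self _ _)
    have hs0 : 0 ≤ ∑ i ∈ T', c i := Finset.sum_nonneg hT0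
    nlinarith [mul_le_mul_of_nonneg_right ihh (by linarith : (0:ℝ) ≤ 1 - c a)]

set_option maxHeartbeats 2000000 in
theorem stmt8 {Ω : Type*} [MeasurableSpace Ω] (μ : Measure Ω) [IsProbabilityMeasure μ]
    {n k : ℕ} (hk : 2 ≤ k) (hn : 2 * k ≤ n)
    (p : ℝ) (hp0 : 0 < p) (hp1 : p < 1)
    (Y : Fin n → Ω → ℝ)
    (hmeas : ∀ i, Measurable (Y i))
    (h01 : ∀ i ω, Y i ω = 0 ∨ Y i ω = 1)
    (hindep : iIndepFun Y μ)
    (hid : ∀ i, μ {ω | Y i ω = 1} = ENNReal.ofReal p)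
    (Z : Fin n → Ω → ℝ)
    (hZ : ∀ i ω, Z i ω =
      ∏ j ∈ Finset.range k, Y ⟨(i.val + j) % n, Nat.mod_lt _ i.pos⟩ ω)
    (t : ℝ) (ht : 0 < t) :
    (μ {ω | ∑ i, Z i ω = 0}).toReal ≤
      (1 - p ^ k) ^ n * (1 + Real.exp (-t) * (p ^ k / (1 - p ^ k))) ^ n +
        t ^ 2 * n * ∑ j ∈ Finset.Icc 1 (k - 1), p ^ (k + j) := by
  classical
  have hn0 : 0 < n := by omega
  have hkn : k ≤ n := by omega
  set s : ℝ := 1 - Real.exp (-t) with hsdef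
  have hexp1 : Real.exp (-t) < 1 := Real.exp_lt_one_iff.mpr (by linarith)
  have hs0 : 0 < s := by simp only [hsdef]; linarith
  have hs1 : s < 1 := by
    have := Real.exp_pos (-t); simp only [hsdef]; linarith
  have hst : s ≤ t := by
    have := Real.add_one_le_exp (-t); simp only [hsdef]; linarith
  have hp0k : 0 < p ^ k := pow_pos hp0 k
  have hp1k : p ^ k < 1 := pow_lt_one₀ hp0.le hp1 (by omega)
  have hq0 : 0 ≤ 1 - s * p ^ k := by nlinarith
  have hq1 : 1 - s * p ^ k ≤ 1 := by nlinarith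
  -- basic index machinery
  set fm : ℕ → Fin n := fun l => ⟨l % n, Nat.mod_lt _ hn0⟩ with hfm
  have fm_period : ∀ l, fm (l + n) = fm l := by
    intro l; apply Fin.ext; simp [hfm, Nat.add_mod_right]
  have fm_inj : ∀ b j₁ j₂, j₁ < n → j₂ < n → fm (b + j₁) = fm (b + j₂) → j₁ = j₂ := by
    intro b j₁ j₂ h₁ h₂ h
    have hmod : (b + j₁) % n = (b + j₂) % n := congrArg Fin.val h
    have : j₁ % n = j₂ % n := Nat.ModEq.add_left_cancel' b hmod
    rwa [Nat.mod_eq_of_lt h₁, Nat.mod_eq_of_lt h₂] at this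
  set P : Finset (Fin n) → Ω → ℝ := fun T ω => ∏ l ∈ T, Y l ω with hP
  have Pmeas : ∀ T, Measurable (P T) := by
    intro T; simp only [hP]; exact Finset.measurable_prod T (fun l _ => hmeas l)
  have P01 : ∀ T ω, P T ω = 0 ∨ P T ω = 1 := fun T ω => aux_prod01 _ _ (fun l _ => h01 l ω)
  have Pnn : ∀ T ω, 0 ≤ P T ω := by
    intro T ω; rcases P01 T ω with h | h <;> rw [h] <;> norm_num
  have Ple1 : ∀ T ω, P T ω ≤ 1 := by
    intro T ω; rcases P01 T ω with h | h <;> rw [h] <;> norm_num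
  have Pint : ∀ T, Integrable (P T) μ := fun T =>
    aux_integrable μ (Pmeas T) 1 (fun ω => abs_le.mpr ⟨by linarith [Pnn T ω], Ple1 T ω⟩)
  have Pmul : ∀ A B ω, P A ω * P B ω = P (A ∪ B) ω := by
    intro A B ω
    rcases P01 (A ∩ B) ω with h | h
    · simp only [hP] at h ⊢
      obtain ⟨l, hl, hY⟩ := Finset.prod_eq_zero_iff.mp h
      rw [Finset.prod_eq_zero (Finset.mem_union_left _ (Finset.mem_of_mem_inter_left hl)) hY,
        Finset.prod_eq_zero (Finset.mem_of_mem_inter_left hl) hY, zero_mul]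
    · have := Finset.prod_union_inter (s₁ := A) (s₂ := B) (f := fun l => Y l ω)
      simp only [hP] at h ⊢
      rw [h, mul_one] at this
      exact this.symm
  have EY : ∀ l, ∫ ω, Y l ω ∂μ = p := by
    intro l
    have hset : MeasurableSet {ω | Y l ω = 1} := by
      have : {ω | Y l ω = 1} = Y l ⁻¹' {1} := rfl
      rw [this]; exact (hmeas l) (measurableSet_singleton 1)
    have hYind : Y l = Set.indicator {ω | Y l ω = 1} 1 := by
      funext ω
      rcases h01 l ω with h | h
      · rw [h, Set.indicator_apply]
        have : ω ∉ {ω | Y l ω = 1} := by simp [Set.mem_setOf_eq, h]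
        simp [this]
      · rw [h, Set.indicator_apply]
        have : ω ∈ {ω | Y l ω = 1} := h
        simp [this]
    rw [show (fun ω => Y l ω) = Y l from rfl, hYind, integral_indicator_one hset, measureReal_def, hid l,
      ENNReal.toReal_ofReal hp0.le]
  have EP : ∀ T, ∫ ω, P T ω ∂μ = p ^ T.card := by
    intro T
    induction T using Finset.induction_on with
    | empty => simp [hP]
    | @insert a T' hni ih =>
      have hPins : (fun ω => P (insert a T') ω) = (fun ω => P T' ω * Y a ω) := by
        funext ω; simp only [hP]; rw [Finset.prod_insert hni]; ring
      have hindepPT : IndepFun (∏ l ∈ T', Y l) (Y a) μ :=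
        hindep.indepFun_finsetProd_of_notMem hmeas hni
      have hPT : (∏ l ∈ T', Y l) = P T' := by
        funext ω; simp only [hP]; rw [Finset.prod_apply]
      rw [hPT] at hindepPT
      have := hindepPT.integral_mul_eq_mul_integral (Pint T').aestronglyMeasurable
        (aux_integrable μ (hmeas a) 1 (fun ω => by rcases h01 a ω with h | h <;> rw [h] <;> norm_num)).aestronglyMeasurable
      have hPm : (P T' * Y a) = fun ω => P T' ω * Y a ω := rfl
      rw [hPm] at this
      rw [hPins]
      show ∫ ω, P T' ω * Y a ω ∂μ = p ^ (insert a T').card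
      rw [show (∫ ω, P T' ω * Y a ω ∂μ) = integral μ fun ω => P T' ω * Y a ω from rfl, this,
        ih, EY a, Finset.card_insert_of_notMem hni, pow_succ]
  -- segments
  set seg : ℕ → ℕ → Finset (Fin n) := fun b l => (Finset.range l).image (fun j => fm (b + j))
    with hseg
  have seg_prod : ∀ b l, l ≤ n → ∀ ω, P (seg b l) ω = ∏ j ∈ Finset.range l, Y (fm (b + j)) ω := by
    intro b l hl ω
    simp only [hseg, hP]
    rw [Finset.prod_image]
    intro j₁ h₁ j₂ h₂ h
    exact fm_inj b j₁ j₂ (lt_of_lt_of_le (Finset.mem_range.mp h₁) hl)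
      (lt_of_lt_of_le (Finset.mem_range.mp h₂) hl) h
  have seg_card : ∀ b l, l ≤ n → (seg b l).card = l := by
    intro b l hl
    simp only [hseg]
    rw [Finset.card_image_of_injOn, Finset.card_range]
    intro j₁ h₁ j₂ h₂ h
    exact fm_inj b j₁ j₂ (lt_of_lt_of_le (Finset.mem_range.mp h₁) hl)
      (lt_of_lt_of_le (Finset.mem_range.mp h₂) hl) h
  have seg_union : ∀ b r, r ≤ k → seg b k ∪ seg (b + r) k = seg b (k + r) := by
    intro b r hr
    apply Finset.ext
    intro x
    simp only [hseg, Finset.mem_union, Finset.mem_image, Finset.mem_range]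
    constructor
    · rintro (⟨j, hj, rfl⟩ | ⟨j, hj, rfl⟩)
      · exact ⟨j, by omega, rfl⟩
      · exact ⟨r + j, by omega, by rw [add_assoc]⟩
    · rintro ⟨j, hj, rfl⟩
      by_cases hjk : j < k
      · exact Or.inl ⟨j, hjk, rfl⟩
      · refine Or.inr ⟨j - r, by omega, ?_⟩
        congr 1; omega
  have seg_shift : ∀ b, n ≤ b → seg (b - n) k = seg b k := by
    intro b hb
    simp only [hseg]
    apply Finset.image_congr
    intro j _
    show fm (b - n + j) = fm (b + j)
    have h2 : b - n + j + n = b + j := by omega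
    rw [← fm_period (b - n + j), h2]
  set ZN : ℕ → Ω → ℝ := fun i => P (seg i k) with hZN
  have ZN01 : ∀ i ω, ZN i ω = 0 ∨ ZN i ω = 1 := fun i ω => P01 _ ω
  have ZNnn : ∀ i ω, 0 ≤ ZN i ω := fun i ω => Pnn _ ω
  have ZNle1 : ∀ i ω, ZN i ω ≤ 1 := fun i ω => Ple1 _ ω
  have ZNmeas : ∀ i, Measurable (ZN i) := fun i => Pmeas _
  have ZNint : ∀ i, Integrable (ZN i) μ := fun i => Pint _
  have ZNdef : ∀ (i : Fin n) ω, ZN i.val ω = Z i ω := by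
    intro i ω
    rw [hZ i ω]
    simp only [hZN]
    rw [seg_prod i.val k hkn ω]
  have ZZmul : ∀ i j ω, ZN i ω * ZN j ω = P (seg i k ∪ seg j k) ω := fun i j ω => Pmul _ _ ω
  have EZZ1 : ∀ j r, 1 ≤ r → r ≤ k - 1 → r ≤ j →
      ∫ ω, ZN (j - r) ω * ZN j ω ∂μ = p ^ (k + r) := by
    intro j r hr1 hrk hrj
    have hukn : k + r ≤ n := by omega
    have hfun : (fun ω => ZN (j - r) ω * ZN j ω) = P (seg (j - r) (k + r)) := by
      funext ω
      rw [ZZmul]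
      congr 2
      rw [← seg_union (j - r) r (by omega)]
      congr 2
      omega
    rw [hfun]
    exact (EP _).trans (by rw [seg_card _ _ hukn])
  have EZZ2 : ∀ j r, 1 ≤ r → r ≤ k - 1 → j < n → n - j ≤ r →
      ∫ ω, ZN (j + r - n) ω * ZN j ω ∂μ = p ^ (k + r) := by
    intro j r hr1 hrk hjn hnr
    have hb : n ≤ j + r := by omega
    have hukn : k + r ≤ n := by omega
    have hshift : seg (j + r - n) k = seg (j + r) k := seg_shift (j + r) hb
    have hfun : (fun ω => ZN (j + r - n) ω * ZN j ω) = P (seg j (k + r)) := by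
      funext ω
      rw [ZZmul]
      congr 2
      rw [hshift, Finset.union_comm, seg_union j r (by omega)]
    rw [hfun]
    exact (EP _).trans (by rw [seg_card _ _ hukn])
  have EZZnn : ∀ i j, 0 ≤ ∫ ω, ZN i ω * ZN j ω ∂μ :=
    fun i j => integral_nonneg (fun ω => mul_nonneg (ZNnn i ω) (ZNnn j ω))
  have ZZint : ∀ i j, Integrable (fun ω => ZN i ω * ZN j ω) μ := fun i j =>
    aux_integrable μ ((ZNmeas i).mul (ZNmeas j)) 1 (fun ω => abs_le.mpr
      ⟨by nlinarith [ZNnn i ω, ZNnn j ω], by nlinarith [ZNnn i ω, ZNnn j ω, ZNle1 i ω, ZNle1 j ω]⟩)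
  -- overlap bookkeeping
  set F1 : ℕ → Finset ℕ := fun j => (Finset.Icc 1 (k-1)).filter (fun r => r ≤ j) with hF1
  set F2 : ℕ → Finset ℕ := fun j => (Finset.Icc 1 (k-1)).filter (fun r => n - j ≤ r) with hF2
  set SS : ℕ → Finset ℕ :=
    fun j => (F1 j).image (fun r => j - r) ∪ (F2 j).image (fun r => j + r - n) with hSS
  set C : ℕ → ℝ := fun j => (∑ r ∈ F1 j, p ^ (k + r)) + ∑ r ∈ F2 j, p ^ (k + r) with hC
  have hC0 : ∀ j, 0 ≤ C j := by
    intro j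
    simp only [hC]
    have h1 : (0:ℝ) ≤ ∑ r ∈ F1 j, p ^ (k + r) :=
      Finset.sum_nonneg (fun r _ => le_of_lt (pow_pos hp0 _))
    have h2 : (0:ℝ) ≤ ∑ r ∈ F2 j, p ^ (k + r) :=
      Finset.sum_nonneg (fun r _ => le_of_lt (pow_pos hp0 _))
    linarith
  have hSsub : ∀ j, j < n → SS j ⊆ Finset.range j := by
    intro j hj i hi
    simp only [hSS, hF1, hF2, Finset.mem_union, Finset.mem_image, Finset.mem_filter,
      Finset.mem_Icc] at hi
    rcases hi with ⟨r, ⟨⟨hr1, hrk⟩, hrj⟩, rfl⟩ | ⟨r, ⟨⟨hr1, hrk⟩, hnr⟩, rfl⟩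
    · exact Finset.mem_range.mpr (by omega)
    · exact Finset.mem_range.mpr (by omega)
  have hSdisj : ∀ j, j < n → ∀ i ∈ Finset.range j \ SS j, Disjoint (seg i k) (seg j k) := by
    intro j hj i hi
    rw [Finset.mem_sdiff] at hi
    obtain ⟨hij, hiS⟩ := hi
    rw [Finset.mem_range] at hij
    have hd1 : k ≤ j - i := by
      by_contra hcon
      push_neg at hcon
      apply hiS
      simp only [hSS]
      apply Finset.mem_union_left
      refine Finset.mem_image.mpr ⟨j - i, ?_, by omega⟩
      simp only [hF1, Finset.mem_filter, Finset.mem_Icc]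
      omega
    have hd2 : k ≤ n - (j - i) := by
      by_contra hcon
      push_neg at hcon
      apply hiS
      simp only [hSS]
      apply Finset.mem_union_right
      refine Finset.mem_image.mpr ⟨n - (j - i), ?_, by omega⟩
      simp only [hF2, Finset.mem_filter, Finset.mem_Icc]
      omega
    rw [Finset.disjoint_left]
    intro x hxi hxj
    simp only [hseg, Finset.mem_image, Finset.mem_range] at hxi hxj
    obtain ⟨a, ha, hxa⟩ := hxi
    obtain ⟨b, hb, hxb⟩ := hxj
    have hmod : (i + a) % n = (j + b) % n := by
      have : fm (i + a) = fm (j + b) := by rw [hxa, hxb]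
      exact congrArg Fin.val this
    have hle : i + a ≤ j + b := by omega
    have hdvd : n ∣ (j + b) - (i + a) := (Nat.modEq_iff_dvd' hle).mp hmod
    obtain ⟨q, hq⟩ := hdvd
    have hlt : (j + b) - (i + a) < n * 2 := by omega
    rw [hq] at hlt
    have hq2 : q < 2 := lt_of_mul_lt_mul_left hlt (Nat.zero_le n)
    interval_cases q <;> omega
  have hScost : ∀ j, j < n → ∑ i ∈ SS j, (∫ ω, ZN i ω * ZN j ω ∂μ) ≤ C j := by
    intro j hj
    have e1 : ∑ i ∈ (F1 j).image (fun r => j - r), (∫ ω, ZN i ω * ZN j ω ∂μ)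
        = ∑ r ∈ F1 j, p ^ (k + r) := by
      rw [Finset.sum_image]
      · apply Finset.sum_congr rfl
        intro r hr
        simp only [hF1, Finset.mem_filter, Finset.mem_Icc] at hr
        exact EZZ1 j r hr.1.1 hr.1.2 hr.2
      · intro r₁ h₁ r₂ h₂ he
        simp only [hF1, Finset.coe_filter, Set.mem_setOf_eq, Finset.mem_Icc] at h₁ h₂
        simp only at he
        omega
    have e2 : ∑ i ∈ (F2 j).image (fun r => j + r - n), (∫ ω, ZN i ω * ZN j ω ∂μ)
        = ∑ r ∈ F2 j, p ^ (k + r) := by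
      rw [Finset.sum_image]
      · apply Finset.sum_congr rfl
        intro r hr
        simp only [hF2, Finset.mem_filter, Finset.mem_Icc] at hr
        exact EZZ2 j r hr.1.1 hr.1.2 hj hr.2
      · intro r₁ h₁ r₂ h₂ he
        simp only [hF2, Finset.coe_filter, Set.mem_setOf_eq, Finset.mem_Icc] at h₁ h₂
        simp only at he
        omega
    have hsplit := Finset.sum_union_inter (s₁ := (F1 j).image (fun r => j - r))
      (s₂ := (F2 j).image (fun r => j + r - n)) (f := fun i => ∫ ω, ZN i ω * ZN j ω ∂μ)
    have hpos : 0 ≤ ∑ i ∈ (F1 j).image (fun r => j - r) ∩ (F2 j).image (fun r => j + r - n),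
        (∫ ω, ZN i ω * ZN j ω ∂μ) := Finset.sum_nonneg (fun i _ => EZZnn i j)
    simp only [hSS, hC]
    linarith
  have count : ∑ j ∈ Finset.range n, C j = n * ∑ r ∈ Finset.Icc 1 (k-1), p ^ (k + r) := by
    simp only [hC, hF1, hF2]
    rw [Finset.sum_add_distrib]
    have c1 : ∑ j ∈ Finset.range n, ∑ r ∈ (Finset.Icc 1 (k-1)).filter (fun r => r ≤ j), p^(k+r)
        = ∑ r ∈ Finset.Icc 1 (k-1), ((n - r : ℕ) : ℝ) * p^(k+r) := by
      simp only [Finset.sum_filter]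
      rw [Finset.sum_comm]
      apply Finset.sum_congr rfl
      intro r hr
      rw [← Finset.sum_filter]
      have hfe : (Finset.range n).filter (fun j => r ≤ j) = Finset.Ico r n := by
        ext j; simp only [Finset.mem_filter, Finset.mem_range, Finset.mem_Ico]; omega
      rw [hfe, Finset.sum_const, Nat.card_Ico, nsmul_eq_mul]
    have c2 : ∑ j ∈ Finset.range n, ∑ r ∈ (Finset.Icc 1 (k-1)).filter (fun r => n - j ≤ r), p^(k+r)
        = ∑ r ∈ Finset.Icc 1 (k-1), (r : ℝ) * p^(k+r) := by
      simp only [Finset.sum_filter]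
      rw [Finset.sum_comm]
      apply Finset.sum_congr rfl
      intro r hr
      rw [← Finset.sum_filter]
      rw [Finset.mem_Icc] at hr
      have hfe : (Finset.range n).filter (fun j => n - j ≤ r) = Finset.Ico (n - r) n := by
        ext j; simp only [Finset.mem_filter, Finset.mem_range, Finset.mem_Ico]; omega
      rw [hfe, Finset.sum_const, Nat.card_Ico, nsmul_eq_mul]
      congr 1
      have : n - (n - r) = r := by omega
      rw [this]
    rw [c1, c2, ← Finset.sum_add_distrib, Finset.mul_sum]
    apply Finset.sum_congr rfl
    intro r hr
    rw [Finset.mem_Icc] at hr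
    have hrn : r ≤ n := by omega
    rw [Nat.cast_sub hrn]
    ring
  have prodP : ∀ (T : Finset ℕ) ω, (∏ i ∈ T, ZN i ω) = P (T.biUnion (fun i => seg i k)) ω := by
    intro T ω
    induction T using Finset.induction_on with
    | empty => simp [hP]
    | @insert a T' hni ih =>
      rw [Finset.prod_insert hni, ih, Finset.biUnion_insert]
      exact Pmul _ _ ω
  set W : ℕ → Ω → ℝ := fun m ω => ∏ i ∈ Finset.range m, (1 - s * ZN i ω) with hW
  have hfac0 : ∀ (i : ℕ) ω, 0 ≤ 1 - s * ZN i ω := by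
    intro i ω; nlinarith [ZNnn i ω, ZNle1 i ω]
  have hfac1 : ∀ (i : ℕ) ω, 1 - s * ZN i ω ≤ 1 := by
    intro i ω; nlinarith [ZNnn i ω]
  have Wnn : ∀ m ω, 0 ≤ W m ω := fun m ω => Finset.prod_nonneg (fun i _ => hfac0 i ω)
  have Wle1 : ∀ m ω, W m ω ≤ 1 :=
    fun m ω => Finset.prod_le_one (fun i _ => hfac0 i ω) (fun i _ => hfac1 i ω)
  have Wmeas : ∀ m, Measurable (W m) := by
    intro m
    exact Finset.measurable_prod _ (fun i _ => measurable_const.sub ((ZNmeas i).const_mul s))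
  have Wint : ∀ m, Integrable (W m) μ := fun m =>
    aux_integrable μ (Wmeas m) 1 (fun ω => abs_le.mpr ⟨by linarith [Wnn m ω], Wle1 m ω⟩)
  have WZint : ∀ m, Integrable (fun ω => W m ω * ZN m ω) μ := fun m =>
    aux_integrable μ ((Wmeas m).mul (ZNmeas m)) 1 (fun ω => abs_le.mpr
      ⟨by nlinarith [Wnn m ω, ZNnn m ω],
       by nlinarith [Wnn m ω, ZNnn m ω, Wle1 m ω, ZNle1 m ω]⟩)
  -- key inequality for one induction step
  have keyV : ∀ (m : ℕ), m < n →
      p ^ k * (∫ ω, W m ω ∂μ) - s * ∑ i ∈ SS m, (∫ ω, ZN i ω * ZN m ω ∂μ)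
        ≤ ∫ ω, W m ω * ZN m ω ∂μ := by
    intro m hm
    set A := Finset.range m \ SS m with hA
    set V : Ω → ℝ := fun ω => ∏ i ∈ A, (1 - s * ZN i ω) with hV
    have Vnn : ∀ ω, 0 ≤ V ω := fun ω => Finset.prod_nonneg (fun i _ => hfac0 i ω)
    have Vle1 : ∀ ω, V ω ≤ 1 :=
      fun ω => Finset.prod_le_one (fun i _ => hfac0 i ω) (fun i _ => hfac1 i ω)
    have Vmeas : Measurable V :=
      Finset.measurable_prod _ (fun i _ => measurable_const.sub ((ZNmeas i).const_mul s))
    have Vint : Integrable V μ :=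
      aux_integrable μ Vmeas 1 (fun ω => abs_le.mpr ⟨by linarith [Vnn ω], Vle1 ω⟩)
    have hWUV : ∀ ω, W m ω = V ω * ∏ i ∈ SS m, (1 - s * ZN i ω) := by
      intro ω
      exact (Finset.prod_sdiff (hSsub m hm)).symm
    have Unn : ∀ ω, (0:ℝ) ≤ ∏ i ∈ SS m, (1 - s * ZN i ω) :=
      fun ω => Finset.prod_nonneg (fun i _ => hfac0 i ω)
    have Ule1 : ∀ ω, (∏ i ∈ SS m, (1 - s * ZN i ω)) ≤ 1 :=
      fun ω => Finset.prod_le_one (fun i _ => hfac0 i ω) (fun i _ => hfac1 i ω)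
    have hUlow : ∀ ω, 1 - s * ∑ i ∈ SS m, ZN i ω ≤ ∏ i ∈ SS m, (1 - s * ZN i ω) := by
      intro ω
      have := aux_weier (SS m) (fun i => s * ZN i ω)
        (fun i _ => mul_nonneg hs0.le (ZNnn i ω))
        (fun i _ => by show s * ZN i ω ≤ 1; nlinarith [ZNnn i ω, ZNle1 i ω])
      rwa [← Finset.mul_sum] at this
    have hpt : ∀ ω, V ω * ZN m ω - s * ∑ i ∈ SS m, (ZN i ω * ZN m ω) ≤ W m ω * ZN m ω := by
      intro ω
      have hVZ : 0 ≤ V ω * ZN m ω := mul_nonneg (Vnn ω) (ZNnn m ω)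
      have h1 : (1 - s * ∑ i ∈ SS m, ZN i ω) * (V ω * ZN m ω)
          ≤ (∏ i ∈ SS m, (1 - s * ZN i ω)) * (V ω * ZN m ω) :=
        mul_le_mul_of_nonneg_right (hUlow ω) hVZ
      have h2 : (∏ i ∈ SS m, (1 - s * ZN i ω)) * (V ω * ZN m ω) = W m ω * ZN m ω := by
        rw [hWUV ω]; ring
      have h3 : ∑ i ∈ SS m, (ZN i ω * (V ω * ZN m ω)) ≤ ∑ i ∈ SS m, (ZN i ω * ZN m ω) := by
        apply Finset.sum_le_sum
        intro i _
        have hh : V ω * ZN m ω ≤ 1 * ZN m ω := mul_le_mul_of_nonneg_right (Vle1 ω) (ZNnn m ω)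
        have := mul_le_mul_of_nonneg_left hh (ZNnn i ω)
        linarith [this]
      have hexp2 : (1 - s * ∑ i ∈ SS m, ZN i ω) * (V ω * ZN m ω)
          = V ω * ZN m ω - s * ∑ i ∈ SS m, (ZN i ω * (V ω * ZN m ω)) := by
        have e : ∑ i ∈ SS m, (ZN i ω * (V ω * ZN m ω))
            = (∑ i ∈ SS m, ZN i ω) * (V ω * ZN m ω) := by rw [Finset.sum_mul]
        rw [e]; ring
      have h4 : s * ∑ i ∈ SS m, (ZN i ω * (V ω * ZN m ω))
          ≤ s * ∑ i ∈ SS m, (ZN i ω * ZN m ω) := mul_le_mul_of_nonneg_left h3 hs0.le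
      calc V ω * ZN m ω - s * ∑ i ∈ SS m, (ZN i ω * ZN m ω)
          ≤ V ω * ZN m ω - s * ∑ i ∈ SS m, (ZN i ω * (V ω * ZN m ω)) := by linarith
        _ = (1 - s * ∑ i ∈ SS m, ZN i ω) * (V ω * ZN m ω) := hexp2.symm
        _ ≤ (∏ i ∈ SS m, (1 - s * ZN i ω)) * (V ω * ZN m ω) := h1
        _ = W m ω * ZN m ω := h2
    have hAdisj : ∀ i ∈ A, Disjoint (seg i k) (seg m k) := fun i hi => hSdisj m hm i hi
    have hVsum : ∀ ω, V ω
        = ∑ T ∈ A.powerset, (-s)^T.card * P (T.biUnion (fun i => seg i k)) ω := by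
      intro ω
      have e0 : V ω = ∏ i ∈ A, ((-s) * ZN i ω + 1) := by
        apply Finset.prod_congr rfl; intro i _; ring
      rw [e0, Finset.prod_add]
      apply Finset.sum_congr rfl
      intro T hT
      rw [Finset.prod_const_one, mul_one, Finset.prod_mul_distrib, Finset.prod_const, prodP T ω]
    have hVZsum : ∀ ω, V ω * ZN m ω
        = ∑ T ∈ A.powerset, (-s)^T.card * P ((T.biUnion (fun i => seg i k)) ∪ seg m k) ω := by
      intro ω
      rw [hVsum ω, Finset.sum_mul]
      apply Finset.sum_congr rfl
      intro T hT
      rw [mul_assoc]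
      congr 1
      exact Pmul _ _ ω
    have hcardT : ∀ T ∈ A.powerset,
        ((T.biUnion (fun i => seg i k)) ∪ seg m k).card
          = (T.biUnion (fun i => seg i k)).card + k := by
      intro T hT
      rw [Finset.card_union_of_disjoint, seg_card m k hkn]
      exact (Finset.disjoint_biUnion_left _ _ _).mpr
        (fun i hi => hAdisj i (Finset.mem_powerset.mp hT hi))
    have hEVZ : ∫ ω, V ω * ZN m ω ∂μ = p ^ k * ∫ ω, V ω ∂μ := by
      have i1 : ∫ ω, V ω * ZN m ω ∂μ = ∑ T ∈ A.powerset,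
          (-s)^T.card * p ^ ((T.biUnion (fun i => seg i k)) ∪ seg m k).card := by
        rw [integral_congr_ae (Filter.Eventually.of_forall hVZsum)]
        rw [integral_finset_sum _ (fun T _ => (Pint _).const_mul _)]
        exact Finset.sum_congr rfl (fun T _ => by rw [integral_const_mul, EP])
      have i2 : ∫ ω, V ω ∂μ = ∑ T ∈ A.powerset,
          (-s)^T.card * p ^ (T.biUnion (fun i => seg i k)).card := by
        rw [integral_congr_ae (Filter.Eventually.of_forall hVsum)]
        rw [integral_finset_sum _ (fun T _ => (Pint _).const_mul _)]
        exact Finset.sum_congr rfl (fun T _ => by rw [integral_const_mul, EP])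
      rw [i1, i2, Finset.mul_sum]
      apply Finset.sum_congr rfl
      intro T hT
      rw [hcardT T hT, pow_add]
      ring
    have hVZint : Integrable (fun ω => V ω * ZN m ω) μ :=
      aux_integrable μ (Vmeas.mul (ZNmeas m)) 1 (fun ω => abs_le.mpr
        ⟨by nlinarith [Vnn ω, ZNnn m ω], by nlinarith [Vnn ω, ZNnn m ω, Vle1 ω, ZNle1 m ω]⟩)
    have hEVW : ∫ ω, W m ω ∂μ ≤ ∫ ω, V ω ∂μ := by
      apply integral_mono (Wint m) Vint
      intro ω
      have := mul_le_mul_of_nonneg_left (Ule1 ω) (Vnn ω)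
      rw [hWUV ω]
      simpa using this
    have hsumint : Integrable (fun ω => s * ∑ i ∈ SS m, (ZN i ω * ZN m ω)) μ := by
      apply Integrable.const_mul
      exact integrable_finset_sum _ (fun i _ => ZZint i m)
    have hint : ∫ ω, (V ω * ZN m ω - s * ∑ i ∈ SS m, (ZN i ω * ZN m ω)) ∂μ
        ≤ ∫ ω, W m ω * ZN m ω ∂μ :=
      integral_mono (hVZint.sub hsumint) (WZint m) hpt
    have hsplit : ∫ ω, (V ω * ZN m ω - s * ∑ i ∈ SS m, (ZN i ω * ZN m ω)) ∂μ
        = (∫ ω, V ω * ZN m ω ∂μ) - s * ∑ i ∈ SS m, (∫ ω, ZN i ω * ZN m ω ∂μ) := by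
      rw [integral_sub hVZint hsumint, integral_const_mul,
        integral_finset_sum _ (fun i _ => ZZint i m)]
    have hstep1 : p ^ k * (∫ ω, W m ω ∂μ) ≤ p ^ k * ∫ ω, V ω ∂μ :=
      mul_le_mul_of_nonneg_left hEVW (pow_nonneg hp0.le k)
    calc p ^ k * (∫ ω, W m ω ∂μ) - s * ∑ i ∈ SS m, (∫ ω, ZN i ω * ZN m ω ∂μ)
        ≤ p ^ k * (∫ ω, V ω ∂μ) - s * ∑ i ∈ SS m, (∫ ω, ZN i ω * ZN m ω ∂μ) := by linarith
      _ = (∫ ω, V ω * ZN m ω ∂μ) - s * ∑ i ∈ SS m, (∫ ω, ZN i ω * ZN m ω ∂μ) := by rw [hEVZ]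
      _ = ∫ ω, (V ω * ZN m ω - s * ∑ i ∈ SS m, (ZN i ω * ZN m ω)) ∂μ := hsplit.symm
      _ ≤ ∫ ω, W m ω * ZN m ω ∂μ := hint
  -- main induction
  have main : ∀ m, m ≤ n → ∫ ω, W m ω ∂μ
      ≤ (1 - s * p ^ k) ^ m + s ^ 2 * ∑ j ∈ Finset.range m, C j := by
    intro m
    induction m with
    | zero =>
      intro _
      simp only [hW, Finset.range_zero, Finset.prod_empty, Finset.sum_empty]
      simp
    | succ m ih =>
      intro hm1
      have hm : m < n := by omega
      have ihm := ih (by omega)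
      have hiw : ∫ ω, W (m+1) ω ∂μ
          = (∫ ω, W m ω ∂μ) - s * ∫ ω, W m ω * ZN m ω ∂μ := by
        have hstep : (fun ω => W (m+1) ω) = fun ω => W m ω - s * (W m ω * ZN m ω) := by
          funext ω
          show (∏ i ∈ Finset.range (m+1), (1 - s * ZN i ω)) = _
          rw [Finset.prod_range_succ]
          show (W m ω) * (1 - s * ZN m ω) = _
          ring
        rw [hstep, integral_sub (Wint m) ((WZint m).const_mul s), integral_const_mul]
      rw [hiw, Finset.sum_range_succ]
      have hkey := keyV m hm
      have hcost := hScost m hm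
      have hWnn : 0 ≤ ∫ ω, W m ω ∂μ := integral_nonneg (fun ω => Wnn m ω)
      have hB0 : 0 ≤ ∑ j ∈ Finset.range m, C j := Finset.sum_nonneg (fun j _ => hC0 j)
      have hmul := mul_le_mul_of_nonneg_left hkey hs0.le
      have h2 := mul_le_mul_of_nonneg_left ihm hq0
      have h3 : s ^ 2 * (∑ i ∈ SS m, (∫ ω, ZN i ω * ZN m ω ∂μ)) ≤ s ^ 2 * C m :=
        mul_le_mul_of_nonneg_left hcost (sq_nonneg s)
      have hfin : (1 - s * p ^ k) * ((1 - s * p ^ k) ^ m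
            + s ^ 2 * ∑ j ∈ Finset.range m, C j) + s ^ 2 * C m
          ≤ (1 - s * p ^ k) ^ (m+1) + s ^ 2 * ((∑ j ∈ Finset.range m, C j) + C m) := by
        rw [pow_succ (1 - s * p ^ k) m]
        nlinarith [mul_le_mul_of_nonneg_right hq1 (mul_nonneg (sq_nonneg s) hB0),
          sq_nonneg s, hB0, hq0, hq1]
      nlinarith [hmul, h2, h3, hfin]
  -- relating to the probability
  have hZmeas : ∀ i : Fin n, Measurable (Z i) := by
    intro i
    have : Z i = fun ω => ZN i.val ω := funext fun ω => (ZNdef i ω).symm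
    rw [this]; exact ZNmeas _
  have hAset : MeasurableSet {ω | ∑ i, Z i ω = 0} := by
    have : {ω | ∑ i, Z i ω = 0} = (fun ω => ∑ i, Z i ω) ⁻¹' {0} := rfl
    rw [this]
    exact (Finset.measurable_sum _ (fun i _ => hZmeas i)) (measurableSet_singleton 0)
  have start : (μ {ω | ∑ i, Z i ω = 0}).toReal ≤ ∫ ω, W n ω ∂μ := by
    rw [← measureReal_def, ← integral_indicator_one hAset]
    apply integral_mono _ (Wint n)
    swap
    · exact aux_integrable μ (measurable_one.indicator hAset) 1 (fun ω => by
        by_cases hω : ω ∈ {ω | ∑ i, Z i ω = 0}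
        · rw [Set.indicator_of_mem hω]; norm_num
        · rw [Set.indicator_of_notMem hω]; norm_num)
    intro ω
    by_cases hω : ω ∈ {ω | ∑ i, Z i ω = 0}
    · have hsum : ∑ i, Z i ω = 0 := hω
      have hz : ∀ i ∈ Finset.univ, Z i ω = 0 := by
        have hnneg : ∀ j ∈ Finset.univ, (0:ℝ) ≤ Z j ω := fun j _ => by
          rw [← ZNdef j ω]; exact ZNnn _ ω
        exact (Finset.sum_eq_zero_iff_of_nonneg hnneg).mp hsum
      have hW1 : W n ω = 1 := by
        apply Finset.prod_eq_one
        intro i hi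
        rw [Finset.mem_range] at hi
        have hzi : ZN i ω = 0 := by
          rw [show (i : ℕ) = ((⟨i, hi⟩ : Fin n) : ℕ) from rfl, ZNdef ⟨i, hi⟩ ω]
          exact hz ⟨i, hi⟩ (Finset.mem_univ _)
        rw [hzi]; ring
      rw [Set.indicator_of_mem hω, hW1]
      norm_num
    · rw [Set.indicator_of_notMem hω]
      exact Wnn n ω
  -- final assembly
  have hsum0 : 0 ≤ ∑ r ∈ Finset.Icc 1 (k-1), p ^ (k + r) :=
    Finset.sum_nonneg (fun r _ => le_of_lt (pow_pos hp0 _))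
  have hfirst : (1 - s * p ^ k) ^ n
      = (1 - p ^ k) ^ n * (1 + Real.exp (-t) * (p ^ k / (1 - p ^ k))) ^ n := by
    rw [← mul_pow]
    congr 1
    have hne : (1:ℝ) - p ^ k ≠ 0 := by linarith
    field_simp [hsdef]
    ring
  have hlast : s ^ 2 * ((n:ℝ) * ∑ r ∈ Finset.Icc 1 (k-1), p ^ (k + r))
      ≤ t ^ 2 * (n:ℝ) * ∑ r ∈ Finset.Icc 1 (k-1), p ^ (k + r) := by
    have hs2 : s ^ 2 ≤ t ^ 2 := by nlinarith
    have hnn : (0:ℝ) ≤ (n:ℝ) * ∑ r ∈ Finset.Icc 1 (k-1), p ^ (k + r) :=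
      mul_nonneg (Nat.cast_nonneg n) hsum0
    nlinarith
  calc (μ {ω | ∑ i, Z i ω = 0}).toReal ≤ ∫ ω, W n ω ∂μ := start
    _ ≤ (1 - s * p ^ k) ^ n + s ^ 2 * ∑ j ∈ Finset.range n, C j := main n le_rfl
    _ = (1 - s * p ^ k) ^ n
        + s ^ 2 * ((n:ℝ) * ∑ r ∈ Finset.Icc 1 (k-1), p ^ (k + r)) := by rw [count]
    _ ≤ (1 - p ^ k) ^ n * (1 + Real.exp (-t) * (p ^ k / (1 - p ^ k))) ^ n
        + t ^ 2 * (n:ℝ) * ∑ j ∈ Finset.Icc 1 (k-1), p ^ (k + j) := by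
      rw [← hfirst]
      linarith [hlast]
end
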